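/- arXiv:2002.01384 — 6 statements merged into one kernel-verified Lean document; each statement's English description precedes it below -/
import Mathlib

section
/- Let $n \geq c$ and let $h_T(x_1,\ldots,x_c)$ denote the complete homogeneous symmetric polynomial of degree $T$ in $c$ variables. Then for any partition $\mu = (\mu_1 > \mu_2 > \cdots > \mu_n \geq 0)$ with strictly decreasing parts, $\sum_{\sigma \in S_n} \mathrm{sgn}(\sigma)\, h_T(x_{\sigma(1)},\ldots,x_{\sigma(c)})\, x_{\sigma(1)}^{\mu_1}\cdots x_{\sigma(n)}^{\mu_n} = \sum_{\lambda} \sum_{\sigma \in S_n} \mathrm{sgn}(\sigma)\, x_{\sigma(1)}^{\lambda_1}\cdots x_{\sigma(n)}^{\lambda_n}$, where the outer sum on the right is over all compositions $\lambda \supseteq \mu$ with $|\lambda| - |\mu| = T$, $\lambda_k = \mu_k$ for $k > c$, and $\lambda_k < \mu_{k-1}$ for $2 \leq k \leq c$. -/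
/-!
Expanding `h_T(x_1, …, x_c)` into monomials `x^d`, with `d` supported on the first `c`
variables and `|d| = T`, turns the left side into `∑_d a_{μ + d}`, where `a_α = det (x_i ^ α_j)`
is the alternant. The compositions `λ = μ + d` with some `λ_k ≥ μ_{k-1}` (`0 < k < c`) cancel in
pairs: swapping `λ_{k-1}` and `λ_k` at the largest such `k` keeps `λ ⊇ μ` (as `μ` decreases),
keeps `k` the largest such index, and negates the alternant; a fixed point of this swap has a
repeated exponent, so its alternant vanishes.
-/

open MvPolynomial Finset

/-- `hPoly n c T` is the complete homogeneous symmetric polynomial of degree `T`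
in the first `c` of the `n` variables `x_1, …, x_n` (0-indexed `x_0, …, x_{c-1}`). -/
noncomputable def hPoly (n c T : ℕ) : MvPolynomial (Fin n) ℤ :=
  ∑ m ∈ (Finset.univ.filter (fun i : Fin n => (i : ℕ) < c)).sym T,
    ((m : Multiset (Fin n)).map X).prod

open Equiv

section Alternant

variable {ι : Type*} [Fintype ι] [DecidableEq ι]

noncomputable def alternant (α : ι → ℕ) : MvPolynomial ι ℤ :=
  (Matrix.of fun i j => (X i ^ α j : MvPolynomial ι ℤ)).det

theorem alternant_eq_sum (α : ι → ℕ) :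
    alternant α = ∑ σ : Perm ι, C (Perm.sign σ : ℤ) * ∏ i, X (σ i) ^ α i := by
  simp [alternant, Matrix.det_apply']

theorem alternant_comp_swap (α : ι → ℕ) {a b : ι} (hab : a ≠ b) :
    alternant (α ∘ swap a b) = -alternant α := by
  change ((Matrix.of fun i j => (X i ^ α j : MvPolynomial ι ℤ)).submatrix id (swap a b)).det = _
  rw [Matrix.det_permute', Perm.sign_swap hab, alternant]
  simp

theorem alternant_eq_zero_of_eq (α : ι → ℕ) {a b : ι} (hab : a ≠ b) (h : α a = α b) :
    alternant α = 0 :=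
  Matrix.det_zero_of_column_eq hab fun i => by simp [h]

theorem rename_prod_map_X (σ : Perm ι) (m : Multiset ι) :
    rename σ (m.map (X : ι → MvPolynomial ι ℤ)).prod = ∏ i, X (σ i) ^ m.count i := by
  rw [map_multiset_prod, Multiset.map_map, prod_multiset_map_count]
  simp only [Function.comp_apply, rename_X]
  exact prod_subset (subset_univ _) fun i _ hi => by
    rw [Multiset.count_eq_zero.2 (by simpa using hi), pow_zero]

theorem sum_sign_mul_rename_prod_X_mul (m : Multiset ι) (μ : ι → ℕ) :
    ∑ σ : Perm ι, C (Perm.sign σ : ℤ) * rename σ (m.map X).prod * ∏ i, X (σ i) ^ μ i =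
      alternant (μ + fun i => m.count i) := by
  simp only [alternant_eq_sum, rename_prod_map_X, mul_assoc, ← prod_mul_distrib, ← pow_add,
    Pi.add_apply, add_comm]

end Alternant

theorem sum_sign_mul_rename_hPoly_mul (n c T : ℕ) (μ : Fin n → ℕ) :
    ∑ σ : Perm (Fin n), C (Perm.sign σ : ℤ) * rename σ (hPoly n c T) * ∏ i, X (σ i) ^ μ i =
      ∑ d ∈ piAntidiag (univ.filter fun i : Fin n => (i : ℕ) < c) T, alternant (μ + d) := by
  simp only [hPoly, map_sum, mul_sum, sum_mul]
  rw [sum_comm, ← map_sym_eq_piAntidiag, sum_map]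
  simp only [sum_sign_mul_rename_prod_X_mul]
  rfl

section Compositions

variable {n : ℕ}

def shiftedCompositions (c T : ℕ) (μ : Fin n → ℕ) : Finset (Fin n → ℕ) :=
  (Fintype.piFinset fun i : Fin n => range (μ i + T + 1)).filter fun lam =>
    (∀ i, μ i ≤ lam i) ∧ ((∑ i, lam i) = (∑ i, μ i) + T) ∧
      (∀ i : Fin n, c ≤ (i : ℕ) → lam i = μ i)

theorem mem_shiftedCompositions {c T : ℕ} {μ lam : Fin n → ℕ} :
    lam ∈ shiftedCompositions c T μ ↔
      (∀ i, μ i ≤ lam i) ∧ ∑ i, lam i = ∑ i, μ i + T ∧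
        ∀ i : Fin n, c ≤ (i : ℕ) → lam i = μ i := by
  simp only [shiftedCompositions, mem_filter, Fintype.mem_piFinset, mem_range,
    and_iff_right_iff_imp]
  rintro ⟨hle, hsum, -⟩ i
  have hi : lam i - μ i ≤ ∑ j, (lam j - μ j) :=
    single_le_sum (f := fun j => lam j - μ j) (fun j _ => Nat.zero_le _) (mem_univ i)
  rw [sum_tsub_distrib _ fun j _ => hle j, hsum] at hi
  omega

theorem sum_piAntidiag_add_eq_sum_shiftedCompositions {M : Type*} [AddCommMonoid M]
    (f : (Fin n → ℕ) → M) (c T : ℕ) (μ : Fin n → ℕ) :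
    ∑ d ∈ piAntidiag (univ.filter fun i : Fin n => (i : ℕ) < c) T, f (μ + d) =
      ∑ lam ∈ shiftedCompositions c T μ, f lam := by
  refine sum_nbij' (μ + ·) (· - μ) (fun d hd => ?_) (fun lam hlam => ?_)
    (fun d _ => add_tsub_cancel_left μ d) (fun lam hlam => ?_) (fun _ _ => rfl)
  · rw [mem_piAntidiag] at hd
    obtain ⟨hsum, hsupp⟩ := hd
    rw [sum_filter_of_ne fun i _ => by simpa using hsupp i] at hsum
    refine mem_shiftedCompositions.2 ⟨fun i => Nat.le_add_right _ _, ?_, fun i hi => ?_⟩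
    · simp only [Pi.add_apply, sum_add_distrib, hsum]
    · have : d i = 0 := by_contra fun h => absurd (by simpa using hsupp i h) (not_lt.2 hi)
      simp [this]
  · obtain ⟨hle, hsum, hfix⟩ := mem_shiftedCompositions.1 hlam
    have hsupp : ∀ i : Fin n, lam i - μ i ≠ 0 → (i : ℕ) < c := fun i hi => by
      by_contra h
      simp [hfix i (not_lt.1 h)] at hi
    refine mem_piAntidiag.2 ⟨?_, fun i hi => by simpa using hsupp i hi⟩
    change ∑ i ∈ _, (lam i - μ i) = T
    rw [sum_filter_of_ne fun i _ => hsupp i, sum_tsub_distrib _ fun i _ => hle i, hsum,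
      add_tsub_cancel_left]
  · exact add_tsub_cancel_of_le fun i => (mem_shiftedCompositions.1 hlam).1 i

theorem comp_swap_mem_shiftedCompositions {c T : ℕ} {μ lam : Fin n → ℕ} {a b : Fin n}
    (ha : (a : ℕ) < c) (hb : (b : ℕ) < c) (hab : μ a ≤ lam b) (hba : μ b ≤ lam a)
    (hlam : lam ∈ shiftedCompositions c T μ) : lam ∘ swap a b ∈ shiftedCompositions c T μ := by
  obtain ⟨hle, hsum, hfix⟩ := mem_shiftedCompositions.1 hlam
  refine mem_shiftedCompositions.2
    ⟨fun i => ?_, by rw [← hsum]; exact Equiv.sum_comp (swap a b) lam, fun i hi => ?_⟩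
  · simp only [Function.comp_apply, swap_apply_def]
    split_ifs with hia hib
    · exact hia ▸ hab
    · exact hib ▸ hba
    · exact hle i
  · rw [Function.comp_apply, swap_apply_of_ne_of_ne (by omega) (by omega), hfix i hi]

end Compositions

section Overlaps

variable {n : ℕ}

def prevIdx (k : Fin n) : Fin n := ⟨k - 1, (Nat.sub_le _ _).trans_lt k.isLt⟩

@[simp]
theorem val_prevIdx (k : Fin n) : (prevIdx k : ℕ) = k - 1 := rfl

def overlaps (c : ℕ) (μ lam : Fin n → ℕ) : Finset (Fin n) :=
  univ.filter fun k => 0 < (k : ℕ) ∧ (k : ℕ) + 1 ≤ c ∧ μ (prevIdx k) ≤ lam k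

def swapTopOverlap (c : ℕ) (μ lam : Fin n → ℕ) : Fin n → ℕ :=
  if h : (overlaps c μ lam).Nonempty then
    lam ∘ swap (prevIdx ((overlaps c μ lam).max' h)) ((overlaps c μ lam).max' h)
  else lam

variable {c : ℕ} {μ lam : Fin n → ℕ} {k : Fin n}

theorem overlaps_nonempty_iff :
    (overlaps c μ lam).Nonempty ↔
      ¬ ∀ j k : Fin n, (j : ℕ) + 1 = k → (k : ℕ) + 1 ≤ c → lam k < μ j := by
  push Not
  constructor
  · rintro ⟨k, hk⟩
    obtain ⟨hk0, hkc, hle⟩ := (mem_filter.1 hk).2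
    exact ⟨prevIdx k, k, by simp only [val_prevIdx]; omega, hkc, hle⟩
  · rintro ⟨j, k, hjk, hkc, hle⟩
    have hj : prevIdx k = j := Fin.ext (by simp only [val_prevIdx]; omega)
    exact ⟨k, mem_filter.2 ⟨mem_univ k, by omega, hkc, hj ▸ hle⟩⟩

theorem prevIdx_lt (hk : k ∈ overlaps c μ lam) : prevIdx k < k := by
  have := (mem_filter.1 hk).2.1
  rw [Fin.lt_def, val_prevIdx]
  omega

theorem mem_overlaps_comp_swap_iff_of_lt {k' : Fin n} (h : k < k') :
    k' ∈ overlaps c μ (lam ∘ swap (prevIdx k) k) ↔ k' ∈ overlaps c μ lam := by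
  have hk' : swap (prevIdx k) k k' = k' :=
    swap_apply_of_ne_of_ne (by rw [Fin.ne_iff_vne, val_prevIdx]; omega) h.ne'
  simp [overlaps, hk']

theorem isGreatest_overlaps_comp_swap (hk : IsGreatest (overlaps c μ lam : Set (Fin n)) k)
    (hle : μ (prevIdx k) ≤ lam (prevIdx k)) :
    IsGreatest (overlaps c μ (lam ∘ swap (prevIdx k) k) : Set (Fin n)) k := by
  refine ⟨?_, fun k' hk' => le_of_not_gt fun hlt => ?_⟩
  · obtain ⟨-, hk0, hkc, -⟩ := mem_filter.1 hk.1
    exact mem_filter.2 ⟨mem_univ _, hk0, hkc, by simpa using hle⟩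
  · exact hlt.not_ge (hk.2 ((mem_overlaps_comp_swap_iff_of_lt hlt).1 hk'))

theorem swapTopOverlap_of_isGreatest (hk : IsGreatest (overlaps c μ lam : Set (Fin n)) k) :
    swapTopOverlap c μ lam = lam ∘ swap (prevIdx k) k := by
  have h : (overlaps c μ lam).Nonempty := ⟨k, hk.1⟩
  rw [swapTopOverlap, dif_pos h, (isGreatest_max' _ h).unique hk]

theorem swapTopOverlap_swapTopOverlap (hk : IsGreatest (overlaps c μ lam : Set (Fin n)) k)
    (hle : μ (prevIdx k) ≤ lam (prevIdx k)) :
    swapTopOverlap c μ (swapTopOverlap c μ lam) = lam := by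
  rw [swapTopOverlap_of_isGreatest hk,
    swapTopOverlap_of_isGreatest (isGreatest_overlaps_comp_swap hk hle)]
  funext i
  simp

end Overlaps

theorem sum_alternant_filter_not_lt_eq_zero {n : ℕ} (c T : ℕ) {μ : Fin n → ℕ}
    (hμ : Antitone μ) :
    ∑ lam ∈ (shiftedCompositions c T μ).filter
      (fun lam => ¬ ∀ j k : Fin n, (j : ℕ) + 1 = k → (k : ℕ) + 1 ≤ c → lam k < μ j),
      alternant lam = 0 := by
  simp_rw [← overlaps_nonempty_iff]
  have top : ∀ lam ∈ (shiftedCompositions c T μ).filter (overlaps c μ · |>.Nonempty),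
      ∃ k, IsGreatest (overlaps c μ lam : Set (Fin n)) k := fun lam hlam =>
    ⟨_, isGreatest_max' _ (mem_filter.1 hlam).2⟩
  refine sum_involution (fun lam _ => swapTopOverlap c μ lam) (fun lam hlam => ?_)
    (fun lam hlam => ?_) (fun lam hlam => ?_) (fun lam hlam => ?_)
  all_goals
    obtain ⟨k, hk⟩ := top lam hlam
    obtain ⟨hmem, -⟩ := mem_filter.1 hlam
    have hpk : prevIdx k ≠ k := (prevIdx_lt hk.1).ne
  · rw [swapTopOverlap_of_isGreatest hk, alternant_comp_swap _ hpk, add_neg_cancel]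
  · intro hne heq
    rw [swapTopOverlap_of_isGreatest hk] at heq
    refine hne (alternant_eq_zero_of_eq lam hpk ?_)
    simpa using congrFun heq k
  · obtain ⟨hle, -, -⟩ := mem_shiftedCompositions.1 hmem
    obtain ⟨-, hk0, hkc, hoverlap⟩ := mem_filter.1 hk.1
    rw [swapTopOverlap_of_isGreatest hk]
    refine mem_filter.2 ⟨comp_swap_mem_shiftedCompositions (by simp only [val_prevIdx]; omega)
      (by omega) hoverlap ((hμ (prevIdx_lt hk.1).le).trans (hle _)) hmem, k, ?_⟩
    exact (isGreatest_overlaps_comp_swap hk (hle _)).1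
  · exact swapTopOverlap_swapTopOverlap hk ((mem_shiftedCompositions.1 hmem).1 _)

theorem stmt0_general (n c T : ℕ) (μ : Fin n → ℕ)
    (hμ : ∀ i j : Fin n, i < j → μ j < μ i) :
    ∑ σ : Equiv.Perm (Fin n),
      (C (Equiv.Perm.sign σ : ℤ)) * rename σ (hPoly n c T) * ∏ i, X (σ i) ^ μ i
    =
    ∑ lam ∈ (Fintype.piFinset fun i : Fin n => Finset.range (μ i + T + 1)).filter
        (fun lam : Fin n → ℕ =>
          (∀ i, μ i ≤ lam i) ∧
          ((∑ i, lam i) = (∑ i, μ i) + T) ∧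
          (∀ i : Fin n, c ≤ (i : ℕ) → lam i = μ i) ∧
          (∀ j k : Fin n, (j : ℕ) + 1 = (k : ℕ) → (k : ℕ) + 1 ≤ c → lam k < μ j)),
      ∑ σ : Equiv.Perm (Fin n),
        (C (Equiv.Perm.sign σ : ℤ)) * ∏ i, X (σ i) ^ lam i := by
  rw [sum_sign_mul_rename_hPoly_mul, sum_piAntidiag_add_eq_sum_shiftedCompositions,
    ← sum_filter_add_sum_filter_not _
      (fun lam => ∀ j k : Fin n, (j : ℕ) + 1 = k → (k : ℕ) + 1 ≤ c → lam k < μ j),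
    sum_alternant_filter_not_lt_eq_zero c T (StrictAnti.antitone hμ), add_zero,
    shiftedCompositions, filter_filter]
  simp only [and_assoc, alternant_eq_sum]

/-- multiplying the alternant `∑_σ sgn(σ) x_{σ(1)}^{μ_1} ⋯ x_{σ(n)}^{μ_n}`
by `h_T(x_{σ(1)},…,x_{σ(c)})` inside the sum yields the sum of alternants over all
compositions `λ ⊇ μ` with `|λ| - |μ| = T`, `λ_k = μ_k` for `k > c` and
`λ_k < μ_{k-1}` for `2 ≤ k ≤ c`.  (All indices are 0-indexed in the formalization.) -/
theorem stmt0 (n c T : ℕ) (hcn : c ≤ n) (hc : 1 ≤ c) (μ : Fin n → ℕ)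
    (hμ : ∀ i j : Fin n, i < j → μ j < μ i) :
    ∑ σ : Equiv.Perm (Fin n),
      (C (Equiv.Perm.sign σ : ℤ)) * rename σ (hPoly n c T) * ∏ i, X (σ i) ^ μ i
    =
    ∑ lam ∈ (Fintype.piFinset fun i : Fin n => Finset.range (μ i + T + 1)).filter
        (fun lam : Fin n → ℕ =>
          (∀ i, μ i ≤ lam i) ∧
          ((∑ i, lam i) = (∑ i, μ i) + T) ∧
          (∀ i : Fin n, c ≤ (i : ℕ) → lam i = μ i) ∧
          (∀ j k : Fin n, (j : ℕ) + 1 = (k : ℕ) → (k : ℕ) + 1 ≤ c → lam k < μ j)),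
      ∑ σ : Equiv.Perm (Fin n),
        (C (Equiv.Perm.sign σ : ℤ)) * ∏ i, X (σ i) ^ lam i :=
  stmt0_general n c T μ hμ
end

section
/- There exists a sign-reversing involution $\iota$ on the set of pairs $(\sigma, \Lambda)$, where $\sigma \in S_n$ and $\Lambda$ is a bad $\mathbf{T}$-extension of $\mu$, such that if $\iota(\sigma,\Lambda) = (\bar\sigma, \bar\Lambda)$ with largest compositions $\lambda$ and $\bar\lambda$ respectively, then $\bar\lambda_{\bar\sigma^{-1}(p)} = \lambda_{\sigma^{-1}(p)}$ for all $1 \leq p \leq n$, and $\mathrm{sgn}(\bar\sigma) = -\mathrm{sgn}(\sigma)$. -/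
open Finset

/-- `IsTExt n ℓ μ c T Λ` : `Λ` is a `T`-extension of `μ` (see the paper; all indices
0-indexed, `Λ h.castSucc = λ^h`). -/
def IsTExt (n ℓ : ℕ) (μ : Fin n → ℕ) (c T : Fin ℓ → ℕ)
    (Λ : Fin (ℓ + 1) → Fin n → ℕ) : Prop :=
  Λ 0 = μ ∧
  ∀ h : Fin ℓ,
    (∀ i, Λ h.castSucc i ≤ Λ h.succ i) ∧
    ((∑ i, Λ h.succ i) = (∑ i, Λ h.castSucc i) + T h) ∧
    (∀ i : Fin n, c h ≤ (i : ℕ) → Λ h.succ i = Λ h.castSucc i)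

/-- A bad `T`-extension: for some `h` there is `2 ≤ k ≤ c_h` (1-indexed) with
`λ^{h+1}_k ≥ λ^{h}_{k-1}`. -/
def IsBadTExt (n ℓ : ℕ) (μ : Fin n → ℕ) (c T : Fin ℓ → ℕ)
    (Λ : Fin (ℓ + 1) → Fin n → ℕ) : Prop :=
  IsTExt n ℓ μ c T Λ ∧
  ∃ h : Fin ℓ, ∃ j k : Fin n, (j : ℕ) + 1 = (k : ℕ) ∧ (k : ℕ) + 1 ≤ c h ∧
    Λ h.castSucc j ≤ Λ h.succ k

namespace Stmt2Aux

variable {n ℓ : ℕ}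

/-- A violation at level `h`, position `k`. -/
def Viol (c : Fin ℓ → ℕ) (Λ : Fin (ℓ + 1) → Fin n → ℕ) (h : Fin ℓ) (k : Fin n) : Prop :=
  ∃ j : Fin n, (j : ℕ) + 1 = (k : ℕ) ∧ (k : ℕ) + 1 ≤ c h ∧ Λ h.castSucc j ≤ Λ h.succ k

theorem exv {μ : Fin n → ℕ} {c T : Fin ℓ → ℕ} {Λ : Fin (ℓ + 1) → Fin n → ℕ}
    (hb : IsBadTExt n ℓ μ c T Λ) : ∃ h k, Viol c Λ h k := by
  obtain ⟨-, h, j, k, h1, h2, h3⟩ := hb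
  exact ⟨h, k, j, h1, h2, h3⟩

open Classical in
noncomputable def hset (c : Fin ℓ → ℕ) (Λ : Fin (ℓ + 1) → Fin n → ℕ) : Finset (Fin ℓ) :=
  Finset.univ.filter fun h => ∃ k, Viol c Λ h k

theorem mem_hset {c : Fin ℓ → ℕ} {Λ : Fin (ℓ + 1) → Fin n → ℕ} {h : Fin ℓ} :
    h ∈ hset c Λ ↔ ∃ k, Viol c Λ h k := by
  simp [hset]

/-- The minimal violating level. -/
noncomputable def bH (c : Fin ℓ → ℕ) (Λ : Fin (ℓ + 1) → Fin n → ℕ)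
    (hb : ∃ h k, Viol c Λ h k) : Fin ℓ :=
  (hset c Λ).min' (by obtain ⟨h, k, hv⟩ := hb; exact ⟨h, mem_hset.2 ⟨k, hv⟩⟩)

theorem bH_exists {c : Fin ℓ → ℕ} {Λ : Fin (ℓ + 1) → Fin n → ℕ}
    (hb : ∃ h k, Viol c Λ h k) : ∃ k, Viol c Λ (bH c Λ hb) k :=
  mem_hset.1 ((hset c Λ).min'_mem _)

theorem bH_min {c : Fin ℓ → ℕ} {Λ : Fin (ℓ + 1) → Fin n → ℕ}
    {hb : ∃ h k, Viol c Λ h k} {g : Fin ℓ} {k : Fin n} (hv : Viol c Λ g k) :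
    bH c Λ hb ≤ g :=
  Finset.min'_le _ _ (mem_hset.2 ⟨k, hv⟩)

open Classical in
noncomputable def kset (c : Fin ℓ → ℕ) (Λ : Fin (ℓ + 1) → Fin n → ℕ)
    (hb : ∃ h k, Viol c Λ h k) : Finset (Fin n) :=
  Finset.univ.filter fun k => Viol c Λ (bH c Λ hb) k

theorem mem_kset {c : Fin ℓ → ℕ} {Λ : Fin (ℓ + 1) → Fin n → ℕ}
    {hb : ∃ h k, Viol c Λ h k} {k : Fin n} :
    k ∈ kset c Λ hb ↔ Viol c Λ (bH c Λ hb) k := by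
  simp [kset]

/-- The maximal violating position at the minimal violating level. -/
noncomputable def bK (c : Fin ℓ → ℕ) (Λ : Fin (ℓ + 1) → Fin n → ℕ)
    (hb : ∃ h k, Viol c Λ h k) : Fin n :=
  (kset c Λ hb).max' (by obtain ⟨k, hv⟩ := bH_exists hb; exact ⟨k, mem_kset.2 hv⟩)

theorem bK_viol {c : Fin ℓ → ℕ} {Λ : Fin (ℓ + 1) → Fin n → ℕ}
    (hb : ∃ h k, Viol c Λ h k) : Viol c Λ (bH c Λ hb) (bK c Λ hb) :=
  mem_kset.1 ((kset c Λ hb).max'_mem _)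

theorem bK_max {c : Fin ℓ → ℕ} {Λ : Fin (ℓ + 1) → Fin n → ℕ}
    {hb : ∃ h k, Viol c Λ h k} {k : Fin n} (hv : Viol c Λ (bH c Λ hb) k) :
    k ≤ bK c Λ hb :=
  Finset.le_max' _ _ (mem_kset.2 hv)

theorem bK_pos {c : Fin ℓ → ℕ} {Λ : Fin (ℓ + 1) → Fin n → ℕ}
    (hb : ∃ h k, Viol c Λ h k) : 1 ≤ (bK c Λ hb : ℕ) := by
  obtain ⟨j, hj, -⟩ := bK_viol hb; omega

/-- The position just before `bK`. -/
noncomputable def bJ (c : Fin ℓ → ℕ) (Λ : Fin (ℓ + 1) → Fin n → ℕ)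
    (hb : ∃ h k, Viol c Λ h k) : Fin n :=
  ⟨(bK c Λ hb : ℕ) - 1, lt_of_le_of_lt (Nat.sub_le _ _) (bK c Λ hb).isLt⟩

theorem bJ_succ {c : Fin ℓ → ℕ} {Λ : Fin (ℓ + 1) → Fin n → ℕ}
    (hb : ∃ h k, Viol c Λ h k) : (bJ c Λ hb : ℕ) + 1 = (bK c Λ hb : ℕ) := by
  have := bK_pos hb; simp only [bJ]; omega

theorem bJ_ne_bK {c : Fin ℓ → ℕ} {Λ : Fin (ℓ + 1) → Fin n → ℕ}
    (hb : ∃ h k, Viol c Λ h k) : bJ c Λ hb ≠ bK c Λ hb := by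
  have := bJ_succ hb
  exact Fin.ne_of_val_ne (by omega)

theorem bK_le_c {c : Fin ℓ → ℕ} {Λ : Fin (ℓ + 1) → Fin n → ℕ}
    (hb : ∃ h k, Viol c Λ h k) : (bK c Λ hb : ℕ) + 1 ≤ c (bH c Λ hb) :=
  (bK_viol hb).choose_spec.2.1

theorem bJK_le {c : Fin ℓ → ℕ} {Λ : Fin (ℓ + 1) → Fin n → ℕ}
    (hb : ∃ h k, Viol c Λ h k) :
    Λ (bH c Λ hb).castSucc (bJ c Λ hb) ≤ Λ (bH c Λ hb).succ (bK c Λ hb) := by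
  obtain ⟨j, hj1, -, hle⟩ := bK_viol hb
  have : j = bJ c Λ hb := Fin.ext (by have := bJ_succ hb; omega)
  rwa [this] at hle

/-- At every level up to the first violating level, the composition is strictly
decreasing. -/
theorem strict {μ : Fin n → ℕ} {c T : Fin ℓ → ℕ} {Λ : Fin (ℓ + 1) → Fin n → ℕ}
    (hμ : ∀ i j : Fin n, i < j → μ j < μ i) (hT : IsTExt n ℓ μ c T Λ)
    (hb : ∃ h k, Viol c Λ h k) :
    ∀ g : Fin (ℓ + 1), (g : ℕ) ≤ (bH c Λ hb : ℕ) →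
      ∀ j k : Fin n, (j : ℕ) + 1 = (k : ℕ) → Λ g k < Λ g j := by
  intro g
  induction g using Fin.induction with
  | zero =>
    intro _ j k hjk
    rw [hT.1]
    exact hμ j k (by rw [Fin.lt_def]; omega)
  | succ i ih =>
    intro hle j k hjk
    have hlt : (i : ℕ) < (bH c Λ hb : ℕ) := by
      have : ((i.succ : Fin (ℓ + 1)) : ℕ) = (i : ℕ) + 1 := Fin.val_succ i
      omega
    have noV : ¬ Viol c Λ i k := fun hv => by
      have h1 : bH c Λ hb ≤ i := bH_min (hb := hb) hv
      rw [Fin.le_def] at h1; omega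
    have mono := (hT.2 i).1
    have froz := (hT.2 i).2.2
    by_cases hkc : (k : ℕ) + 1 ≤ c i
    · have h1 : Λ i.succ k < Λ i.castSucc j := by
        by_contra hle'
        exact noV ⟨j, hjk, hkc, by omega⟩
      exact lt_of_lt_of_le h1 (mono j)
    · have h2 : Λ i.succ k = Λ i.castSucc k := froz k (by omega)
      have h3 : Λ i.castSucc k < Λ i.castSucc j :=
        ih (by rw [Fin.coe_castSucc]; omega) j k hjk
      calc Λ i.succ k = Λ i.castSucc k := h2
        _ < Λ i.castSucc j := h3
        _ ≤ Λ i.succ j := mono j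

/-- The tail-swapped extension. -/
noncomputable def newΛ (c : Fin ℓ → ℕ) (Λ : Fin (ℓ + 1) → Fin n → ℕ)
    (hb : ∃ h k, Viol c Λ h k) : Fin (ℓ + 1) → Fin n → ℕ :=
  fun g i =>
    if (bH c Λ hb : ℕ) < (g : ℕ) then Λ g (Equiv.swap (bJ c Λ hb) (bK c Λ hb) i)
    else Λ g i

theorem newΛ_of_le {c : Fin ℓ → ℕ} {Λ : Fin (ℓ + 1) → Fin n → ℕ}
    (hb : ∃ h k, Viol c Λ h k) {g : Fin (ℓ + 1)} (hle : (g : ℕ) ≤ (bH c Λ hb : ℕ)) :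
    newΛ c Λ hb g = Λ g :=
  funext fun i => if_neg (by omega)

theorem newΛ_of_gt {c : Fin ℓ → ℕ} {Λ : Fin (ℓ + 1) → Fin n → ℕ}
    (hb : ∃ h k, Viol c Λ h k) {g : Fin (ℓ + 1)} (hgt : (bH c Λ hb : ℕ) < (g : ℕ))
    (i : Fin n) :
    newΛ c Λ hb g i = Λ g (Equiv.swap (bJ c Λ hb) (bK c Λ hb) i) :=
  if_pos hgt

theorem swap_eq_self {c : Fin ℓ → ℕ} {Λ : Fin (ℓ + 1) → Fin n → ℕ}
    (hb : ∃ h k, Viol c Λ h k) {i : Fin n} (hi : (bK c Λ hb : ℕ) < (i : ℕ)) :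
    Equiv.swap (bJ c Λ hb) (bK c Λ hb) i = i := by
  have hJ := bJ_succ hb
  exact Equiv.swap_apply_of_ne_of_ne (Fin.ne_of_val_ne (by omega))
    (Fin.ne_of_val_ne (by omega))

theorem new_isTExt {μ : Fin n → ℕ} {c T : Fin ℓ → ℕ} {Λ : Fin (ℓ + 1) → Fin n → ℕ}
    (hμ : ∀ i j : Fin n, i < j → μ j < μ i)
    (hmono : ∀ h h' : Fin ℓ, h ≤ h' → c h ≤ c h')
    (hT : IsTExt n ℓ μ c T Λ) (hb : ∃ h k, Viol c Λ h k) :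
    IsTExt n ℓ μ c T (newΛ c Λ hb) := by
  set H := bH c Λ hb with hHdef
  set J := bJ c Λ hb with hJdef
  set K := bK c Λ hb with hKdef
  have hJK : (J : ℕ) + 1 = (K : ℕ) := bJ_succ hb
  have hKc : (K : ℕ) + 1 ≤ c H := bK_le_c hb
  constructor
  · rw [newΛ_of_le hb (by simp)]
    exact hT.1
  · intro h
    have mono := (hT.2 h).1
    have hsum := (hT.2 h).2.1
    have froz := (hT.2 h).2.2
    rcases lt_trichotomy (h : ℕ) (H : ℕ) with hlt | heq | hgt
    · rw [newΛ_of_le hb (by rw [Fin.coe_castSucc]; omega),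
        newΛ_of_le hb (by rw [Fin.val_succ]; omega)]
      exact hT.2 h
    · have hhH : h = H := Fin.ext heq
      subst hhH
      have hgt : (bH c Λ hb : ℕ) < ((H.succ : Fin (ℓ + 1)) : ℕ) := by
        rw [Fin.val_succ]; omega
      rw [newΛ_of_le hb (by rw [Fin.coe_castSucc])]
      simp only [newΛ_of_gt hb hgt]
      refine ⟨?_, ?_, ?_⟩
      · intro i
        rcases eq_or_ne i J with rfl | hiJ
        · rw [Equiv.swap_apply_left]
          exact bJK_le hb
        rcases eq_or_ne i K with rfl | hiK
        · rw [Equiv.swap_apply_right]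
          have h1 : Λ H.castSucc K < Λ H.castSucc J :=
            strict hμ hT hb H.castSucc (by rw [Fin.coe_castSucc]) J K hJK
          exact le_trans (le_of_lt h1) (mono J)
        · rw [Equiv.swap_apply_of_ne_of_ne hiJ hiK]
          exact mono i
      · rw [Equiv.sum_comp (Equiv.swap J K) (Λ H.succ)]
        exact hsum
      · intro i hci
        rw [swap_eq_self hb (by omega)]
        exact froz i hci
    · have hg1 : (bH c Λ hb : ℕ) < ((h.castSucc : Fin (ℓ + 1)) : ℕ) := by
        rw [Fin.coe_castSucc]; omega
      have hg2 : (bH c Λ hb : ℕ) < ((h.succ : Fin (ℓ + 1)) : ℕ) := by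
        rw [Fin.val_succ]; omega
      simp only [newΛ_of_gt hb hg1, newΛ_of_gt hb hg2]
      refine ⟨fun i => mono _, ?_, ?_⟩
      · rw [Equiv.sum_comp (Equiv.swap J K) (Λ h.succ),
          Equiv.sum_comp (Equiv.swap J K) (Λ h.castSucc)]
        exact hsum
      · intro i hci
        have hcH : c H ≤ c h := hmono H h (by rw [Fin.le_def]; omega)
        rw [swap_eq_self hb (by omega)]
        exact froz i (by omega)

theorem viol_new_at {μ : Fin n → ℕ} {c T : Fin ℓ → ℕ} {Λ : Fin (ℓ + 1) → Fin n → ℕ}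
    (hT : IsTExt n ℓ μ c T Λ) (hb : ∃ h k, Viol c Λ h k) :
    Viol c (newΛ c Λ hb) (bH c Λ hb) (bK c Λ hb) := by
  refine ⟨bJ c Λ hb, bJ_succ hb, bK_le_c hb, ?_⟩
  rw [newΛ_of_le hb (by rw [Fin.coe_castSucc]),
    newΛ_of_gt hb (by rw [Fin.val_succ]; omega) (bK c Λ hb), Equiv.swap_apply_right]
  exact ((hT.2 (bH c Λ hb)).1 (bJ c Λ hb))

theorem exv_new {μ : Fin n → ℕ} {c T : Fin ℓ → ℕ} {Λ : Fin (ℓ + 1) → Fin n → ℕ}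
    (hT : IsTExt n ℓ μ c T Λ) (hb : ∃ h k, Viol c Λ h k) :
    ∃ h k, Viol c (newΛ c Λ hb) h k :=
  ⟨_, _, viol_new_at hT hb⟩

theorem bH_new {μ : Fin n → ℕ} {c T : Fin ℓ → ℕ} {Λ : Fin (ℓ + 1) → Fin n → ℕ}
    (hT : IsTExt n ℓ μ c T Λ) (hb : ∃ h k, Viol c Λ h k)
    (hb' : ∃ h k, Viol c (newΛ c Λ hb) h k) :
    bH c (newΛ c Λ hb) hb' = bH c Λ hb := by
  refine le_antisymm (bH_min (viol_new_at hT hb)) ?_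
  by_contra hcon
  push_neg at hcon
  obtain ⟨k, hv⟩ := bH_exists hb'
  set g := bH c (newΛ c Λ hb) hb' with hgdef
  have hglt : (g : ℕ) < (bH c Λ hb : ℕ) := by rw [Fin.lt_def] at hcon; omega
  obtain ⟨j, hj1, hj2, hj3⟩ := hv
  rw [newΛ_of_le hb (by rw [Fin.coe_castSucc]; omega),
    newΛ_of_le hb (by rw [Fin.val_succ]; omega)] at hj3
  have : bH c Λ hb ≤ g := bH_min (hb := hb) ⟨j, hj1, hj2, hj3⟩
  rw [Fin.le_def] at this; omega

theorem bK_new {μ : Fin n → ℕ} {c T : Fin ℓ → ℕ} {Λ : Fin (ℓ + 1) → Fin n → ℕ}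
    (hT : IsTExt n ℓ μ c T Λ) (hb : ∃ h k, Viol c Λ h k)
    (hb' : ∃ h k, Viol c (newΛ c Λ hb) h k) :
    bK c (newΛ c Λ hb) hb' = bK c Λ hb := by
  have hH := bH_new hT hb hb'
  refine le_antisymm ?_ ?_
  · -- every violation of newΛ at level bH is at position ≤ bK
    obtain ⟨j, hj1, hj2, hj3⟩ := bK_viol hb'
    rw [hH] at hj2 hj3
    set k := bK c (newΛ c Λ hb) hb' with hkdef
    by_contra hcon
    push_neg at hcon
    have hklt : (bK c Λ hb : ℕ) < (k : ℕ) := by rw [Fin.lt_def] at hcon; omega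
    rw [newΛ_of_le hb (by rw [Fin.coe_castSucc]),
      newΛ_of_gt hb (by rw [Fin.val_succ]; omega) k, swap_eq_self hb hklt] at hj3
    have : k ≤ bK c Λ hb := bK_max (hb := hb) ⟨j, hj1, hj2, hj3⟩
    rw [Fin.le_def] at this; omega
  · have hv := viol_new_at hT hb
    rw [← hH] at hv
    exact bK_max hv

theorem bJ_new {μ : Fin n → ℕ} {c T : Fin ℓ → ℕ} {Λ : Fin (ℓ + 1) → Fin n → ℕ}
    (hT : IsTExt n ℓ μ c T Λ) (hb : ∃ h k, Viol c Λ h k)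
    (hb' : ∃ h k, Viol c (newΛ c Λ hb) h k) :
    bJ c (newΛ c Λ hb) hb' = bJ c Λ hb := by
  have := bK_new hT hb hb'
  exact Fin.ext (by simp only [bJ, this])

theorem new_new {μ : Fin n → ℕ} {c T : Fin ℓ → ℕ} {Λ : Fin (ℓ + 1) → Fin n → ℕ}
    (hT : IsTExt n ℓ μ c T Λ) (hb : ∃ h k, Viol c Λ h k)
    (hb' : ∃ h k, Viol c (newΛ c Λ hb) h k) :
    newΛ c (newΛ c Λ hb) hb' = Λ := by
  funext g i
  show (if (bH c (newΛ c Λ hb) hb' : ℕ) < (g : ℕ) then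
      newΛ c Λ hb g (Equiv.swap (bJ c (newΛ c Λ hb) hb') (bK c (newΛ c Λ hb) hb') i)
    else newΛ c Λ hb g i) = Λ g i
  rw [bH_new hT hb hb', bJ_new hT hb hb', bK_new hT hb hb']
  by_cases hg : (bH c Λ hb : ℕ) < (g : ℕ)
  · rw [if_pos hg, newΛ_of_gt hb hg, Equiv.swap_apply_self]

  · rw [if_neg hg, newΛ_of_le hb (by omega)]

theorem new_isBad {μ : Fin n → ℕ} {c T : Fin ℓ → ℕ} {Λ : Fin (ℓ + 1) → Fin n → ℕ}
    (hμ : ∀ i j : Fin n, i < j → μ j < μ i)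
    (hmono : ∀ h h' : Fin ℓ, h ≤ h' → c h ≤ c h')
    (hbad : IsBadTExt n ℓ μ c T Λ) :
    IsBadTExt n ℓ μ c T (newΛ c Λ (exv hbad)) := by
  refine ⟨new_isTExt hμ hmono hbad.1 (exv hbad), ?_⟩
  obtain ⟨j, h1, h2, h3⟩ := viol_new_at hbad.1 (exv hbad)
  exact ⟨bH c Λ (exv hbad), j, bK c Λ (exv hbad), h1, h2, h3⟩

end Stmt2Aux

open Stmt2Aux in
/-- there is a sign-reversing involution `ι` on pairs `(σ, Λ)` of a
permutation and a bad `T`-extension which preserves the multiset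
`p ↦ λ_{σ⁻¹(p)}` of exponents attached to the variables, where `λ = Λ (Fin.last ℓ)`
is the largest composition of the extension. -/
theorem stmt2 (n ℓ : ℕ) (μ : Fin n → ℕ) (hμ : ∀ i j : Fin n, i < j → μ j < μ i)
    (c T : Fin ℓ → ℕ) (hmono : ∀ h h' : Fin ℓ, h ≤ h' → c h ≤ c h')
    (hc1 : ∀ h, 1 ≤ c h) (hcn : ∀ h, c h ≤ n) :
    ∃ ι : {p : Equiv.Perm (Fin n) × (Fin (ℓ + 1) → Fin n → ℕ) //
            IsBadTExt n ℓ μ c T p.2} →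
          {p : Equiv.Perm (Fin n) × (Fin (ℓ + 1) → Fin n → ℕ) //
            IsBadTExt n ℓ μ c T p.2},
      (∀ s, ι (ι s) = s) ∧
      (∀ s, Equiv.Perm.sign (ι s).1.1 = - Equiv.Perm.sign s.1.1) ∧
      (∀ s, ∀ p : Fin n,
        (ι s).1.2 (Fin.last ℓ) (((ι s).1.1)⁻¹ p) = s.1.2 (Fin.last ℓ) ((s.1.1)⁻¹ p)) := by
  refine ⟨fun s =>
    ⟨(s.1.1 * Equiv.swap (bJ c s.1.2 (exv s.2)) (bK c s.1.2 (exv s.2)),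
      newΛ c s.1.2 (exv s.2)),
      new_isBad hμ hmono s.2⟩, ?_, ?_, ?_⟩
  · -- involution
    intro s
    obtain ⟨⟨σ, Λ⟩, hbad⟩ := s
    apply Subtype.ext
    apply Prod.ext
    · show σ * Equiv.swap (bJ c Λ (exv hbad)) (bK c Λ (exv hbad)) *
        Equiv.swap (bJ c (newΛ c Λ (exv hbad)) _) (bK c (newΛ c Λ (exv hbad)) _) = σ
      rw [bJ_new hbad.1 (exv hbad) _, bK_new hbad.1 (exv hbad) _,
        mul_assoc, Equiv.swap_mul_self, mul_one]
    · exact new_new hbad.1 (exv hbad) _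
  · -- sign reversing
    intro s
    have hne := bJ_ne_bK (exv s.2)
    show Equiv.Perm.sign (s.1.1 * Equiv.swap _ _) = _
    rw [Equiv.Perm.sign_mul, Equiv.Perm.sign_swap hne, mul_neg_one]
  · -- weight preserving
    intro s p
    set J := bJ c s.1.2 (exv s.2)
    set K := bK c s.1.2 (exv s.2)
    show newΛ c s.1.2 (exv s.2) (Fin.last ℓ) ((s.1.1 * Equiv.swap J K)⁻¹ p) = _
    have hlast : (bH c s.1.2 (exv s.2) : ℕ) < ((Fin.last ℓ : Fin (ℓ + 1)) : ℕ) := by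
      rw [Fin.val_last]
      exact (bH c s.1.2 (exv s.2)).isLt
    rw [mul_inv_rev, Equiv.swap_inv]
    rw [newΛ_of_gt (exv s.2) hlast]
    show s.1.2 (Fin.last ℓ) (Equiv.swap J K (Equiv.swap J K ((s.1.1)⁻¹ p))) = _
    rw [Equiv.swap_apply_self]
end

section
/- Let $K$ be a valid column (strictly decreasing sequence) and suppose $a \leq z$. If inserting $z$ into $K$ yields column $K'$ (with or without a bumped entry $\hat z$), and then inserting $a$ into $K'$ yields column $K''$ with bumped entry $\hat a$, then: (i) $\hat a$ always exists (the second insertion always bumps an entry), and (ii) if $z$'s insertion bumped $\hat z$, then $\hat a \leq \hat z$. -/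
/-- Dual RSK column insertion of `a` into a column `K` (listed top to bottom):
replace the uppermost entry `k` with `a ≤ k` by `a`, bumping out `k`; if no such
entry exists append `a` at the bottom.  Returns the new column together with the
bumped entry (if any). -/
def colInsert (a : ℕ) : List ℕ → List ℕ × Option ℕ
  | [] => ([a], none)
  | k :: K =>
    if a ≤ k then (a :: K, some k)
    else
      let r := colInsert a K
      (k :: r.1, r.2)

lemma bump_ge (a : ℕ) : ∀ (K : List ℕ) (w : ℕ), (colInsert a K).2 = some w → a ≤ w
  | [], w => by simp [colInsert]
  | k :: K, w => by
    rw [colInsert]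
    split
    · rename_i h
      intro hw
      simp at hw
      omega
    · exact bump_ge a K w

/-- if `a ≤ z`, `K` is a valid column, `z` is inserted into `K`
(giving `K'`, possibly bumping `ẑ`), and then `a` is inserted into `K'`, then
(i) the second insertion always bumps an entry `â`, and (ii) if the first insertion
bumped `ẑ`, then `â ≤ ẑ`. -/
theorem stmt4 (a z : ℕ) (K : List ℕ) (hK : K.Chain' (· > ·)) (haz : a ≤ z) :
    ((colInsert a (colInsert z K).1).2).isSome ∧
    ∀ ahat zhat : ℕ, (colInsert z K).2 = some zhat →
      (colInsert a (colInsert z K).1).2 = some ahat → ahat ≤ zhat := by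
  induction K with
  | nil => simp [colInsert, haz]
  | cons k K ih =>
    by_cases hz : z ≤ k
    · simp [colInsert, hz, haz]
    · rw [colInsert, if_neg hz]
      simp only
      rw [colInsert]
      split
      · rename_i h
        constructor
        · simp
        · intro ahat zhat h1 h2
          simp at h2
          have := bump_ge z K zhat h1
          omega
      · exact ih (hK.tail)
end

section
/- Let $\mu$ be a partition with $n$ parts and conjugate $\mu' = (c_\ell,\ldots,c_1)$, let $\lambda \supseteq \mu$ be a partition, and let $\mathbf{T} = (T_1,\ldots,T_\ell)$. Then there is a bijection between maximal multiset tableaux of shape $\mu$ with weight $\lambda$ and column weight $\mathbf{T}$, and restricted tableaux of shape $\lambda/\mu$ with weight $\mathbf{T}$. -/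
open Finset MvPolynomial

/-- Height of the column with label `j` (columns are labeled `ℓ, ℓ-1, …, 1` from
left to right, so the column labeled `j` is the one in 0-indexed position `ℓ - j`):
the number of rows `i` with `μ i > ℓ - j`. -/
def colHt (n : ℕ) (μ : Fin n → ℕ) (ℓ j : ℕ) : ℕ :=
  (Finset.univ.filter fun i : Fin n => ℓ - j < μ i).card

/-- A multiset tableau of shape `μ` (a partition with `n` parts, all parts `≤ ℓ`).
`box i j` is the content of the box in row `i` (0-indexed) and the column
labeled `j` (labels `ℓ, …, 1` from left to right); boxes outside the diagram are
empty.  Entries are positive integers; the maximum of each box is strictly less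
than the minimum of the box below it and weakly less than the minimum of the box
to its right (the box to the right of column label `j+1` is column label `j`). -/
structure MTab (n ℓ : ℕ) (μ : Fin n → ℕ) where
  box : Fin n → ℕ → Multiset ℕ
  pos : ∀ i j, ∀ a ∈ box i j, 1 ≤ a
  supp : ∀ i j, box i j ≠ 0 ↔ (1 ≤ j ∧ j ≤ ℓ ∧ ℓ - j < μ i)
  right : ∀ (i : Fin n) (j : ℕ), ∀ a ∈ box i (j + 1), ∀ z ∈ box i j, a ≤ z
  below : ∀ (i i' : Fin n) (j : ℕ), (i : ℕ) + 1 = (i' : ℕ) →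
    ∀ a ∈ box i j, ∀ z ∈ box i' j, a < z

/-- The weight of a multiset tableau: the number of entries equal to `v`. -/
def MTab.wt {n ℓ : ℕ} {μ : Fin n → ℕ} (P : MTab n ℓ μ) (v : ℕ) : ℕ :=
  ∑ i : Fin n, ∑ j ∈ Finset.Icc 1 ℓ, (P.box i j).count v

/-- The column weight of a multiset tableau at column label `j`: the number of
entries in column `j` minus the height of column `j`. -/
def MTab.cw {n ℓ : ℕ} {μ : Fin n → ℕ} (P : MTab n ℓ μ) (j : ℕ) : ℕ :=
  (∑ i : Fin n, (P.box i j).card) - colHt n μ ℓ j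

/-- The maximality conditions for a multiset tableau: box `b_{ij}` (row `i`,
0-indexed, column label `j`) contains only entries equal to `i + 1` (the paper's
1-indexed row number), and for all adjacent rows `i, i+1` and all `k ≥ 0`,
`∑_{1 ≤ j ≤ k} (|b_{(i+1)j}| - |b_{i(j-1)}|) ≤ 1`. -/
def MTab.IsMax {n ℓ : ℕ} {μ : Fin n → ℕ} (P : MTab n ℓ μ) : Prop :=
  (∀ (i : Fin n) (j : ℕ), ∀ a ∈ P.box i j, a = (i : ℕ) + 1) ∧
  (∀ (i i' : Fin n), (i : ℕ) + 1 = (i' : ℕ) → ∀ k : ℕ,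
    (∑ j ∈ Finset.Icc 1 k, (((P.box i' j).card : ℤ) - ((P.box i (j - 1)).card : ℤ))) ≤ 1)

/-- A restricted tableau of skew shape `λ/μ`: a semistandard filling (0-indexed
columns from the left this time, value `0` marking empty cells) with values in
`{1, …, ℓ}`, weakly increasing along rows, strictly increasing down columns, and
such that every entry `v` occurs on or above row `c_v` (1-indexed), where
`c_v = colHt n μ ℓ v` is the height of column `v` of `μ`. -/
structure RTab (n ℓ : ℕ) (μ lam : Fin n → ℕ) where
  entry : Fin n → ℕ → ℕ
  supp : ∀ i j, entry i j ≠ 0 ↔ (μ i ≤ j ∧ j < lam i)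
  le_alpha : ∀ i j, entry i j ≤ ℓ
  row : ∀ (i : Fin n) (j j' : ℕ), j ≤ j' → entry i j ≠ 0 → entry i j' ≠ 0 →
    entry i j ≤ entry i j'
  col : ∀ (i i' : Fin n) (j : ℕ), i < i' → entry i j ≠ 0 → entry i' j ≠ 0 →
    entry i j < entry i' j
  restrict : ∀ i j, entry i j ≠ 0 → (i : ℕ) < colHt n μ ℓ (entry i j)

/-- The weight of a restricted tableau: the number of entries equal to `v ≥ 1`. -/
def RTab.wt {n ℓ : ℕ} {μ lam : Fin n → ℕ} (R : RTab n ℓ μ lam) (v : ℕ) : ℕ :=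
  ∑ i : Fin n, ((Finset.range (lam i)).filter fun j => R.entry i j = v).card

/-- A semistandard Young tableau of shape `λ` with positive integer entries
(0-indexed columns, value `0` marking empty cells). -/
structure SSYTab (n : ℕ) (lam : Fin n → ℕ) where
  entry : Fin n → ℕ → ℕ
  supp : ∀ i j, entry i j ≠ 0 ↔ j < lam i
  row : ∀ (i : Fin n) (j j' : ℕ), j ≤ j' → entry i j ≠ 0 → entry i j' ≠ 0 →
    entry i j ≤ entry i j'
  col : ∀ (i i' : Fin n) (j : ℕ), i < i' → entry i j ≠ 0 → entry i' j ≠ 0 →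
    entry i j < entry i' j

/-- The weight of a semistandard Young tableau. -/
def SSYTab.wt {n : ℕ} {lam : Fin n → ℕ} (Q : SSYTab n lam) (v : ℕ) : ℕ :=
  ∑ i : Fin n, ((Finset.range (lam i)).filter fun j => Q.entry i j = v).card

/-!
Both sides are in bijection with their row counts: the number `count i v` of letters `v` in row
`i` of a restricted tableau, which is also the number of entries of the box `b_{iv}` of a maximal
multiset tableau beyond the one every box of `μ` holds. All entries of a box of a maximal
multiset tableau are forced, so it is determined by its box sizes, and a semistandard row is
determined by its letter counts. Let `S_i(k) = μ_i + ∑_{v ≤ k} count i v` be the number of cells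
of row `i` of `λ` filled by `μ` or by letters `≤ k`. Condition (2) of maximality for the rows
`i, i + 1` and column strictness of the restricted tableau both come down to
`S_{i+1}(k) ≤ S_i(k - 1)`, and a letter `v` may occur in row `i` exactly when `b_{iv}` is a box
of `μ`. Row `i` of the multiset tableau holds `S_i(ℓ) = λ_i` entries, and its column weight, like
the weight of the restricted tableau, is given by the column sums of `count`.
-/

attribute [ext] MTab RTab

theorem lt_add_card_filter_Ico_iff {p : ℕ → Prop} [DecidablePred p] {a b c : ℕ}
    (hp : ∀ x y, a ≤ x → x ≤ y → y < b → p y → p x) (hc : c ∈ Ico a b) :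
    c < a + #{x ∈ Ico a b | p x} ↔ p c := by
  rw [mem_Ico] at hc
  constructor
  · intro h
    by_contra hpc
    have hsub : {x ∈ Ico a b | p x} ⊆ Ico a c := fun x hx => by
      rw [mem_filter, mem_Ico] at hx
      exact mem_Ico.2 ⟨hx.1.1, lt_of_not_ge fun hcx => hpc (hp c x hc.1 hcx hx.1.2 hx.2)⟩
    have := card_le_card hsub
    rw [Nat.card_Ico] at this
    omega
  · intro hpc
    have hsub : Ico a (c + 1) ⊆ {x ∈ Ico a b | p x} := fun x hx => by
      rw [mem_Ico] at hx
      exact mem_filter.2 ⟨mem_Ico.2 ⟨hx.1, by omega⟩, hp x c hx.1 (by omega) hc.2 hpc⟩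
    have := card_le_card hsub
    rw [Nat.card_Ico] at this
    omega

theorem sum_Icc_one_comp_pred (f : ℕ → ℕ) (hf : f 0 = 0) (k : ℕ) :
    ∑ j ∈ Icc 1 k, f (j - 1) = ∑ j ∈ Icc 1 (k - 1), f j := by
  induction k with
  | zero => simp
  | succ k ih =>
    rw [sum_Icc_succ_top (by omega), ih, Nat.add_sub_cancel]
    cases k with
    | zero => simpa using hf
    | succ k => rw [sum_Icc_succ_top (by omega), Nat.succ_sub_one]

theorem eq_of_forall_sum_Icc_one_eq {f g : ℕ → ℕ}
    (h : ∀ w, ∑ v ∈ Icc 1 w, f v = ∑ v ∈ Icc 1 w, g v) {v : ℕ} (hv : 1 ≤ v) : f v = g v := by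
  obtain ⟨w, rfl⟩ := Nat.exists_eq_add_of_le' hv
  have := h (w + 1)
  rw [sum_Icc_succ_top (by omega), sum_Icc_succ_top (by omega), h w] at this
  omega

theorem sum_Icc_one_eq_zero {f : ℕ → ℕ} {a k : ℕ} (hf : ∀ v, f v ≠ 0 → a < v) (hk : k ≤ a) :
    ∑ v ∈ Icc 1 k, f v = 0 :=
  sum_eq_zero fun v hv => by
    by_contra h
    have := hf v h
    rw [mem_Icc] at hv
    omega

theorem sum_Icc_one_min {f : ℕ → ℕ} {ℓ : ℕ} (hf : ∀ v, f v ≠ 0 → v ≤ ℓ) (k : ℕ) :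
    ∑ v ∈ Icc 1 (min k ℓ), f v = ∑ v ∈ Icc 1 k, f v :=
  sum_subset (Icc_subset_Icc_right (min_le_left k ℓ)) fun v hv hv' => by
    by_contra h
    have := hf v h
    simp only [mem_Icc] at hv hv'
    omega

theorem sum_Icc_one_mono (f : ℕ → ℕ) {k k' : ℕ} (h : k ≤ k') :
    ∑ v ∈ Icc 1 k, f v ≤ ∑ v ∈ Icc 1 k', f v :=
  sum_le_sum_of_subset (Icc_subset_Icc_right h)

theorem card_filter_Icc_one_shape (ℓ m k : ℕ) :
    #{j ∈ Icc 1 k | 1 ≤ j ∧ j ≤ ℓ ∧ ℓ - j < m} = min k ℓ - (ℓ - m) := by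
  rw [← Nat.card_Ioc]
  congr 1
  ext j
  simp only [mem_filter, mem_Icc, mem_Ioc]
  omega

theorem lt_colHt_iff {n ℓ : ℕ} {μ : Fin n → ℕ} (hμ : Antitone μ) (i : Fin n) (j : ℕ) :
    (i : ℕ) < colHt n μ ℓ j ↔ ℓ - j < μ i := by
  unfold colHt
  constructor
  · intro h
    by_contra hi
    have hsub : ({r | ℓ - j < μ r} : Finset (Fin n)) ⊆ Iio i := fun r hr => by
      rw [mem_filter] at hr
      exact mem_Iio.2 (lt_of_not_ge fun hir => hi (hr.2.trans_le (hμ hir)))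
    have := card_le_card hsub
    rw [Fin.card_Iio] at this
    omega
  · intro hi
    have hsub : Iic i ⊆ ({r | ℓ - j < μ r} : Finset (Fin n)) := fun r hr =>
      mem_filter.2 ⟨mem_univ r, hi.trans_le (hμ (mem_Iic.1 hr))⟩
    have := card_le_card hsub
    rw [Fin.card_Iic] at this
    omega

section BoxCard

variable {n : ℕ} (ℓ : ℕ) (μ : Fin n → ℕ)

def boxCard (g : Fin n → ℕ → ℕ) (i : Fin n) (j : ℕ) : ℕ :=
  g i j + if 1 ≤ j ∧ j ≤ ℓ ∧ ℓ - j < μ i then 1 else 0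

theorem sum_boxCard_row (g : Fin n → ℕ → ℕ) (i : Fin n) (k : ℕ) :
    ∑ j ∈ Icc 1 k, boxCard ℓ μ g i j = ∑ j ∈ Icc 1 k, g i j + (min k ℓ - (ℓ - μ i)) := by
  simp only [boxCard, sum_add_distrib, ← card_filter, card_filter_Icc_one_shape]

theorem sum_boxCard_col (g : Fin n → ℕ → ℕ) {j : ℕ} (hj : 1 ≤ j) (hjℓ : j ≤ ℓ) :
    ∑ i, boxCard ℓ μ g i j = ∑ i, g i j + colHt n μ ℓ j := by
  simp only [boxCard, sum_add_distrib, colHt, card_filter, hj, hjℓ, true_and]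

variable {ℓ μ}

theorem forall_sum_boxCard_sub_le_one_iff {g : Fin n → ℕ → ℕ} {i i' : Fin n}
    (hg : ∀ r v, g r v ≠ 0 → 1 ≤ v ∧ v ≤ ℓ ∧ ℓ - v < μ r) (hμi : μ i' ≤ μ i) (hμℓ : μ i ≤ ℓ) :
    (∀ k, ∑ j ∈ Icc 1 k, ((boxCard ℓ μ g i' j : ℤ) - boxCard ℓ μ g i (j - 1)) ≤ 1) ↔
      ∀ k, 1 ≤ k → k ≤ ℓ →
        μ i' + ∑ v ∈ Icc 1 k, g i' v ≤ μ i + ∑ v ∈ Icc 1 (k - 1), g i v := by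
  have hg0 : boxCard ℓ μ g i 0 = 0 := by
    have : g i 0 = 0 := by_contra fun h => by have := hg i 0 h; omega
    simp [boxCard, this]
  have hsum : ∀ k, ∑ j ∈ Icc 1 k, ((boxCard ℓ μ g i' j : ℤ) - boxCard ℓ μ g i (j - 1)) =
      ((∑ v ∈ Icc 1 (min k ℓ), g i' v + (min k ℓ - (ℓ - μ i')) : ℕ) : ℤ) -
        ((∑ v ∈ Icc 1 (min (k - 1) ℓ), g i v + (min (k - 1) ℓ - (ℓ - μ i)) : ℕ) : ℤ) := by
    intro k
    rw [sum_sub_distrib, ← Nat.cast_sum, ← Nat.cast_sum,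
      sum_Icc_one_comp_pred (boxCard ℓ μ g i) hg0, sum_boxCard_row, sum_boxCard_row,
      sum_Icc_one_min (fun v h => (hg i' v h).2.1), sum_Icc_one_min (fun v h => (hg i v h).2.1)]
  have hzero : ∀ k, k ≤ ℓ - μ i' → ∑ v ∈ Icc 1 k, g i' v = 0 := fun k hk =>
    sum_Icc_one_eq_zero (fun v h => by have := hg i' v h; omega) hk
  simp only [hsum]
  constructor
  · intro h k hk1 hkℓ
    have hk := h k
    rw [min_eq_left hkℓ, min_eq_left (by omega)] at hk
    by_cases hka : k ≤ ℓ - μ i'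
    · rw [hzero k hka]
      omega
    · omega
  · intro h k
    by_cases hkℓ : k ≤ ℓ
    · rw [min_eq_left hkℓ, min_eq_left (by omega)]
      by_cases hka : k ≤ ℓ - μ i'
      · rw [hzero k hka]
        omega
      · have := h k (by omega) hkℓ
        omega
    · rw [min_eq_right (by omega), min_eq_right (by omega)]
      have := sum_Icc_one_mono (g i) (Nat.sub_le ℓ 1)
      by_cases hla : ℓ ≤ ℓ - μ i'
      · rw [hzero ℓ hla]
        omega
      · have := h ℓ (by omega) le_rfl
        omega

end BoxCard

@[ext]
structure RowCounts (n ℓ : ℕ) (μ lam : Fin n → ℕ) where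
  count : Fin n → ℕ → ℕ
  mem_shape_of_count_ne_zero : ∀ i v, count i v ≠ 0 → 1 ≤ v ∧ v ≤ ℓ ∧ ℓ - v < μ i
  row_sum : ∀ i, μ i + ∑ v ∈ Icc 1 ℓ, count i v = lam i
  column_strict : ∀ i i' : Fin n, (i : ℕ) + 1 = i' → ∀ k, 1 ≤ k → k ≤ ℓ →
    μ i' + ∑ v ∈ Icc 1 k, count i' v ≤ μ i + ∑ v ∈ Icc 1 (k - 1), count i v

namespace MTab

variable {n ℓ : ℕ} {μ : Fin n → ℕ}

def extra (P : MTab n ℓ μ) (i : Fin n) (j : ℕ) : ℕ :=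
  Multiset.card (P.box i j) - 1

theorem mem_shape_of_extra_ne_zero (P : MTab n ℓ μ) (i : Fin n) (j : ℕ)
    (h : P.extra i j ≠ 0) : 1 ≤ j ∧ j ≤ ℓ ∧ ℓ - j < μ i :=
  (P.supp i j).1 fun h0 => h (by simp [extra, h0])

theorem card_box (P : MTab n ℓ μ) (i : Fin n) (j : ℕ) :
    Multiset.card (P.box i j) = boxCard ℓ μ P.extra i j := by
  rw [boxCard, extra]
  split_ifs with hj
  · have := Multiset.card_pos.2 ((P.supp i j).2 hj)
    omega
  · rw [not_not.1 (mt (P.supp i j).1 hj), Multiset.card_zero]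

theorem cw_eq_sum_extra (P : MTab n ℓ μ) {j : ℕ} (hj : 1 ≤ j) (hjℓ : j ≤ ℓ) :
    P.cw j = ∑ i, P.extra i j := by
  simp only [cw, card_box, sum_boxCard_col ℓ μ _ hj hjℓ, Nat.add_sub_cancel]

theorem wt_eq_sum_card (P : MTab n ℓ μ) (hP : ∀ (i : Fin n) j, ∀ a ∈ P.box i j, a = i + 1)
    (i : Fin n) : P.wt (i + 1) = ∑ j ∈ Icc 1 ℓ, Multiset.card (P.box i j) := by
  rw [wt, sum_eq_single_of_mem i (mem_univ i)]
  · exact sum_congr rfl fun j _ => Multiset.count_eq_card.2 fun a ha => (hP i j a ha).symm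
  · refine fun r _ hr => sum_eq_zero fun j _ => Multiset.count_eq_zero.2 fun ha => hr ?_
    have := hP r j _ ha
    omega

end MTab

namespace RowCounts

variable {n ℓ : ℕ} {μ lam : Fin n → ℕ}

theorem sum_count_min (p : RowCounts n ℓ μ lam) (i : Fin n) (k : ℕ) :
    ∑ v ∈ Icc 1 (min k ℓ), p.count i v = ∑ v ∈ Icc 1 k, p.count i v :=
  sum_Icc_one_min (fun v h => (p.mem_shape_of_count_ne_zero i v h).2.1) k

theorem count_zero (p : RowCounts n ℓ μ lam) (i : Fin n) : p.count i 0 = 0 :=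
  by_contra fun h => by have := p.mem_shape_of_count_ne_zero i 0 h; omega

def toMTab (p : RowCounts n ℓ μ lam) : MTab n ℓ μ where
  box i j := Multiset.replicate (boxCard ℓ μ p.count i j) (i + 1)
  pos i j a ha := by
    rw [Multiset.eq_of_mem_replicate ha]
    omega
  supp i j := by
    rw [Ne, ← Multiset.card_eq_zero, Multiset.card_replicate, boxCard]
    by_cases hj : 1 ≤ j ∧ j ≤ ℓ ∧ ℓ - j < μ i
    · simp [hj]
    · simp only [hj, if_false, add_zero, iff_false, not_not]
      exact by_contra fun h => hj (p.mem_shape_of_count_ne_zero i j h)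
  right i j a ha z hz := by
    rw [Multiset.eq_of_mem_replicate ha, Multiset.eq_of_mem_replicate hz]
  below i i' j hi a ha z hz := by
    rw [Multiset.eq_of_mem_replicate ha, Multiset.eq_of_mem_replicate hz]
    omega

theorem card_toMTab_box (p : RowCounts n ℓ μ lam) (i : Fin n) (j : ℕ) :
    Multiset.card (p.toMTab.box i j) = boxCard ℓ μ p.count i j :=
  Multiset.card_replicate _ _

theorem extra_toMTab (p : RowCounts n ℓ μ lam) : p.toMTab.extra = p.count := by
  funext i j
  rw [MTab.extra, card_toMTab_box, boxCard]
  split_ifs with hj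
  · omega
  · have : p.count i j = 0 := by_contra fun h => hj (p.mem_shape_of_count_ne_zero i j h)
    omega

theorem isMax_toMTab (hμ : Antitone μ) (hμℓ : ∀ i, μ i ≤ ℓ) (p : RowCounts n ℓ μ lam) :
    p.toMTab.IsMax := by
  refine ⟨fun i j a ha => Multiset.eq_of_mem_replicate ha, fun i i' hi => ?_⟩
  simp only [card_toMTab_box]
  exact (forall_sum_boxCard_sub_le_one_iff p.mem_shape_of_count_ne_zero
    (hμ (Fin.le_def.2 (by omega))) (hμℓ i)).2 (p.column_strict i i' hi)

theorem wt_toMTab (hμℓ : ∀ i, μ i ≤ ℓ) (p : RowCounts n ℓ μ lam) (i : Fin n) :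
    p.toMTab.wt (i + 1) = lam i := by
  rw [p.toMTab.wt_eq_sum_card (fun i j a ha => Multiset.eq_of_mem_replicate ha)]
  simp only [card_toMTab_box, sum_boxCard_row, min_self, ← p.row_sum i]
  have := hμℓ i
  omega

def ofMaxMTab (hμ : Antitone μ) (hμℓ : ∀ i, μ i ≤ ℓ) (P : MTab n ℓ μ) (hP : P.IsMax)
    (hwt : ∀ i : Fin n, P.wt (i + 1) = lam i) : RowCounts n ℓ μ lam where
  count := P.extra
  mem_shape_of_count_ne_zero := P.mem_shape_of_extra_ne_zero
  row_sum i := by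
    have h := hwt i
    simp only [P.wt_eq_sum_card hP.1, MTab.card_box, sum_boxCard_row, min_self] at h
    have := hμℓ i
    omega
  column_strict i i' hi := by
    have h := hP.2 i i' hi
    simp only [MTab.card_box] at h
    exact (forall_sum_boxCard_sub_le_one_iff P.mem_shape_of_extra_ne_zero
      (hμ (Fin.le_def.2 (by omega))) (hμℓ i)).1 h

def maxMTabEquiv (hμ : Antitone μ) (hμℓ : ∀ i, μ i ≤ ℓ) :
    {P : MTab n ℓ μ // P.IsMax ∧ ∀ i : Fin n, P.wt (i + 1) = lam i} ≃ RowCounts n ℓ μ lam where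
  toFun P := ofMaxMTab hμ hμℓ P.1 P.2.1 P.2.2
  invFun p := ⟨p.toMTab, p.isMax_toMTab hμ hμℓ, p.wt_toMTab hμℓ⟩
  left_inv P := by
    ext : 2
    funext i j
    simp only [toMTab, ofMaxMTab, ← MTab.card_box]
    exact (Multiset.eq_replicate_card.2 (P.2.1.1 i j)).symm
  right_inv p := by
    ext : 1
    exact p.extra_toMTab

end RowCounts

namespace RTab

variable {n ℓ : ℕ} {μ lam : Fin n → ℕ}

def count (R : RTab n ℓ μ lam) (i : Fin n) (v : ℕ) : ℕ :=
  #{c ∈ Ico (μ i) (lam i) | R.entry i c = v}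

theorem entry_ne_zero (R : RTab n ℓ μ lam) {i : Fin n} {c : ℕ} (hc : c ∈ Ico (μ i) (lam i)) :
    R.entry i c ≠ 0 :=
  (R.supp i c).2 (mem_Ico.1 hc)

theorem entry_eq_zero_of_notMem (R : RTab n ℓ μ lam) {i : Fin n} {c : ℕ}
    (hc : c ∉ Ico (μ i) (lam i)) : R.entry i c = 0 :=
  not_not.1 (mt (R.supp i c).1 (by rwa [mem_Ico] at hc))

theorem sum_count (R : RTab n ℓ μ lam) (i : Fin n) (w : ℕ) :
    ∑ v ∈ Icc 1 w, R.count i v = #{c ∈ Ico (μ i) (lam i) | R.entry i c ≤ w} := by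
  unfold RTab.count
  rw [sum_card_fiberwise_eq_card_filter]
  refine congrArg card (filter_congr fun c hc => ?_)
  have := R.entry_ne_zero hc
  rw [mem_Icc]
  omega

theorem entry_le_iff (R : RTab n ℓ μ lam) {i : Fin n} {c : ℕ} (hc : c ∈ Ico (μ i) (lam i))
    (w : ℕ) : R.entry i c ≤ w ↔ c < μ i + ∑ v ∈ Icc 1 w, R.count i v := by
  rw [sum_count, lt_add_card_filter_Ico_iff _ hc]
  intro x y hx hxy hy hyw
  exact (R.row i x y hxy (R.entry_ne_zero (mem_Ico.2 ⟨hx, by omega⟩))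
    (R.entry_ne_zero (mem_Ico.2 ⟨by omega, hy⟩))).trans hyw

theorem wt_eq_sum_count (R : RTab n ℓ μ lam) {v : ℕ} (hv : 1 ≤ v) :
    R.wt v = ∑ i, R.count i v := by
  refine sum_congr rfl fun i _ => congrArg card (ext fun c => ?_)
  simp only [mem_filter, mem_range, mem_Ico]
  constructor
  · rintro ⟨hc, rfl⟩
    exact ⟨(R.supp i c).1 (by omega), rfl⟩
  · rintro ⟨⟨-, hc⟩, rfl⟩
    exact ⟨hc, rfl⟩

theorem mem_shape_of_count_ne_zero (hμ : Antitone μ) (R : RTab n ℓ μ lam) (i : Fin n) (v : ℕ)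
    (h : R.count i v ≠ 0) : 1 ≤ v ∧ v ≤ ℓ ∧ ℓ - v < μ i := by
  obtain ⟨c, hc⟩ := card_ne_zero.1 h
  rw [mem_filter] at hc
  obtain ⟨hc, rfl⟩ := hc
  have hne := R.entry_ne_zero hc
  exact ⟨by omega, R.le_alpha i c, (lt_colHt_iff hμ i _).1 (R.restrict i c hne)⟩

theorem row_sum (hsub : ∀ i, μ i ≤ lam i) (R : RTab n ℓ μ lam) (i : Fin n) :
    μ i + ∑ v ∈ Icc 1 ℓ, R.count i v = lam i := by
  rw [sum_count, filter_true_of_mem fun c _ => R.le_alpha i c, Nat.card_Ico]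
  have := hsub i
  omega

theorem column_strict (hμ : Antitone μ) (hlam : Antitone lam) (R : RTab n ℓ μ lam)
    (i i' : Fin n) (hi : (i : ℕ) + 1 = i') (k : ℕ) :
    μ i' + ∑ v ∈ Icc 1 k, R.count i' v ≤ μ i + ∑ v ∈ Icc 1 (k - 1), R.count i v := by
  have hii' : i < i' := Fin.lt_def.2 (by omega)
  have hμi := hμ hii'.le
  have hlami := hlam hii'.le
  have hrow' := card_filter_le (Ico (μ i') (lam i')) fun c => R.entry i' c ≤ k
  rw [Nat.card_Ico, ← sum_count] at hrow'
  set c := μ i + ∑ v ∈ Icc 1 (k - 1), R.count i v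
  by_contra! hc
  have hci : c ∈ Ico (μ i) (lam i) := mem_Ico.2 ⟨by omega, by omega⟩
  have hci' : c ∈ Ico (μ i') (lam i') := mem_Ico.2 ⟨by omega, by omega⟩
  have hcol := R.col i i' c hii' (R.entry_ne_zero hci) (R.entry_ne_zero hci')
  have hle' := (R.entry_le_iff hci' k).2 hc
  have hnle := mt (R.entry_le_iff hci (k - 1)).1 (lt_irrefl c)
  omega

end RTab

namespace RowCounts

variable {n ℓ : ℕ} {μ lam : Fin n → ℕ}

theorem sum_count_le (p : RowCounts n ℓ μ lam) (i : Fin n) (w : ℕ) :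
    μ i + ∑ v ∈ Icc 1 w, p.count i v ≤ lam i := by
  rw [← p.sum_count_min, ← p.row_sum i]
  exact Nat.add_le_add_left (sum_Icc_one_mono _ (min_le_right w ℓ)) _

theorem column_strict_of_lt (p : RowCounts n ℓ μ lam) {i i' : Fin n} (hi : i < i') {k : ℕ}
    (hk : 1 ≤ k) (hkℓ : k ≤ ℓ) :
    μ i' + ∑ v ∈ Icc 1 k, p.count i' v ≤ μ i + ∑ v ∈ Icc 1 (k - 1), p.count i v := by
  obtain ⟨d, hd⟩ : ∃ d, (i' : ℕ) = i + d + 1 := ⟨i' - i - 1, by rw [Fin.lt_def] at hi; omega⟩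
  induction d generalizing i' with
  | zero => exact p.column_strict i i' (by omega) k hk hkℓ
  | succ d ih =>
    have hr : (i : ℕ) + d + 1 < n := by omega
    have h₁ := ih (i' := ⟨i + d + 1, hr⟩) (Fin.lt_def.2 (by simp)) rfl
    have h₂ := p.column_strict ⟨i + d + 1, hr⟩ i' (by simp; omega) k hk hkℓ
    have := sum_Icc_one_mono (p.count ⟨i + d + 1, hr⟩) (Nat.sub_le k 1)
    omega

/-- The `c`-th cell of row `i`, for `μ i ≤ c < λ i`, holds one more than the number of letters
`u` all of whose copies in row `i` precede column `c`. -/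
def entry (p : RowCounts n ℓ μ lam) (i : Fin n) (c : ℕ) : ℕ :=
  if μ i ≤ c ∧ c < lam i then #{u ∈ Icc 1 ℓ | μ i + ∑ v ∈ Icc 1 u, p.count i v ≤ c} + 1 else 0

theorem entry_ne_zero_iff (p : RowCounts n ℓ μ lam) (i : Fin n) (c : ℕ) :
    p.entry i c ≠ 0 ↔ μ i ≤ c ∧ c < lam i := by
  unfold entry
  split_ifs with hc <;> simp [hc]

theorem entry_le_iff (p : RowCounts n ℓ μ lam) {i : Fin n} {c : ℕ} (hc : c ∈ Ico (μ i) (lam i))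
    (w : ℕ) : p.entry i c ≤ w ↔ c < μ i + ∑ v ∈ Icc 1 w, p.count i v := by
  rw [mem_Ico] at hc
  have hentry : p.entry i c =
      #{u ∈ Ico 1 (ℓ + 1) | μ i + ∑ v ∈ Icc 1 u, p.count i v ≤ c} + 1 := by
    rw [entry, if_pos hc, Ico_add_one_right_eq_Icc]
  have hle : ∀ u, 1 ≤ u → u ≤ ℓ → (p.entry i c ≤ u ↔ c < μ i + ∑ v ∈ Icc 1 u, p.count i v) := by
    intro u hu huℓ
    have := lt_add_card_filter_Ico_iff (a := 1) (b := ℓ + 1)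
      (p := fun u => μ i + ∑ v ∈ Icc 1 u, p.count i v ≤ c)
      (fun x y _ hxy _ hy => (Nat.add_le_add_left (sum_Icc_one_mono _ hxy) _).trans hy)
      (mem_Ico.2 ⟨hu, by omega⟩)
    rw [hentry, ← not_le, ← this]
    omega
  rcases Nat.eq_zero_or_pos w with rfl | hw
  · rw [hentry, Icc_eq_empty_of_lt zero_lt_one, sum_empty]
    omega
  rcases le_or_gt w ℓ with hwℓ | hwℓ
  · exact hle w hw hwℓ
  · have hsum := p.sum_count_min i w
    rw [min_eq_right hwℓ.le] at hsum
    have hrow := p.row_sum i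
    have hcard := card_filter_le (Ico 1 (ℓ + 1)) fun u => μ i + ∑ v ∈ Icc 1 u, p.count i v ≤ c
    rw [Nat.card_Ico] at hcard
    omega

def toRTab (hμ : Antitone μ) (p : RowCounts n ℓ μ lam) : RTab n ℓ μ lam where
  entry := p.entry
  supp := p.entry_ne_zero_iff
  le_alpha i c := by
    by_cases hc : μ i ≤ c ∧ c < lam i
    · exact (p.entry_le_iff (mem_Ico.2 hc) ℓ).2 (by rw [p.row_sum i]; exact hc.2)
    · simp [entry, hc]
  row i c c' hcc' h h' := by
    rw [entry_ne_zero_iff] at h h'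
    rw [p.entry_le_iff (mem_Ico.2 h)]
    exact hcc'.trans_lt ((p.entry_le_iff (mem_Ico.2 h') _).1 le_rfl)
  col i i' c hi h h' := by
    rw [entry_ne_zero_iff] at h h'
    set v := p.entry i' c
    have hv1 : 1 ≤ v := Nat.one_le_iff_ne_zero.2 ((p.entry_ne_zero_iff i' c).2 h')
    have hvℓ : v ≤ ℓ := (p.entry_le_iff (mem_Ico.2 h') ℓ).2 (by rw [p.row_sum i']; exact h'.2)
    have hcv := (p.entry_le_iff (mem_Ico.2 h') v).1 le_rfl
    have hcs := p.column_strict_of_lt hi hv1 hvℓ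
    have := (p.entry_le_iff (mem_Ico.2 h) (v - 1)).2 (by omega)
    omega
  restrict i c h := by
    rw [entry_ne_zero_iff] at h
    set v := p.entry i c
    have hv1 : 1 ≤ v := Nat.one_le_iff_ne_zero.2 ((p.entry_ne_zero_iff i c).2 h)
    have hcv := (p.entry_le_iff (mem_Ico.2 h) v).1 le_rfl
    have hcv' := mt (p.entry_le_iff (mem_Ico.2 h) (v - 1)).2 (by omega)
    have hsucc := sum_Icc_succ_top (Nat.le_add_left 1 (v - 1)) (p.count i)
    rw [Nat.sub_add_cancel hv1] at hsucc
    rw [lt_colHt_iff hμ]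
    exact (p.mem_shape_of_count_ne_zero i v (by omega)).2.2

theorem count_toRTab (hμ : Antitone μ) (p : RowCounts n ℓ μ lam) :
    (p.toRTab hμ).count = p.count := by
  funext i v
  rcases Nat.eq_zero_or_pos v with rfl | hv
  · rw [p.count_zero, RTab.count, card_eq_zero, filter_eq_empty_iff]
    exact fun c hc => (p.toRTab hμ).entry_ne_zero hc
  · refine eq_of_forall_sum_Icc_one_eq (fun w => ?_) hv
    have := p.sum_count_le i w
    rw [RTab.sum_count]
    change #{c ∈ Ico (μ i) (lam i) | p.entry i c ≤ w} = _
    rw [filter_congr fun c hc => p.entry_le_iff hc w, Ico_filter_lt, Nat.card_Ico]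
    omega

def rtabEquiv (hμ : Antitone μ) (hlam : Antitone lam) (hsub : ∀ i, μ i ≤ lam i) :
    RTab n ℓ μ lam ≃ RowCounts n ℓ μ lam where
  toFun R := ⟨R.count, R.mem_shape_of_count_ne_zero hμ, R.row_sum hsub,
    fun i i' hi k _ _ => R.column_strict hμ hlam i i' hi k⟩
  invFun p := p.toRTab hμ
  left_inv R := by
    ext : 1
    funext i c
    by_cases hc : c ∈ Ico (μ i) (lam i)
    · exact eq_of_forall_ge_iff fun w => by
        rw [R.entry_le_iff hc]
        exact RowCounts.entry_le_iff _ hc w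
    · rw [RTab.entry_eq_zero_of_notMem _ hc, R.entry_eq_zero_of_notMem hc]
  right_inv p := RowCounts.ext (p.count_toRTab hμ)

end RowCounts

/-- for a partition `μ` with `n` parts and largest part `ℓ`, a
partition `λ ⊇ μ`, and `T = (T_1, …, T_ℓ)`, there is a bijection between maximal
multiset tableaux of shape `μ` with weight `λ` and column weight `T`, and
restricted tableaux of shape `λ/μ` with weight `T`. -/
theorem stmt7 (n ℓ : ℕ) (hn : 0 < n) (μ lam : Fin n → ℕ)
    (hμ : ∀ i j : Fin n, i ≤ j → μ j ≤ μ i) (hl : ℓ = μ ⟨0, hn⟩)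
    (hlam : ∀ i j : Fin n, i ≤ j → lam j ≤ lam i) (hsub : ∀ i, μ i ≤ lam i)
    (T : ℕ → ℕ) :
    Nonempty
      ({P : MTab n ℓ μ // P.IsMax ∧ (∀ i : Fin n, P.wt ((i : ℕ) + 1) = lam i) ∧
          (∀ j, 1 ≤ j → j ≤ ℓ → P.cw j = T j)} ≃
        {R : RTab n ℓ μ lam // ∀ v, 1 ≤ v → v ≤ ℓ → R.wt v = T v}) := by
  have hμℓ : ∀ i, μ i ≤ ℓ := fun i => hl ▸ hμ ⟨0, hn⟩ i (Nat.zero_le _)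
  let colSums (p : RowCounts n ℓ μ lam) : Prop := ∀ v, 1 ≤ v → v ≤ ℓ → ∑ i, p.count i v = T v
  have eMTab := (RowCounts.maxMTabEquiv hμ hμℓ).subtypeEquiv (q := colSums)
    (p := fun P => ∀ j, 1 ≤ j → j ≤ ℓ → P.1.cw j = T j) fun P =>
      forall₃_congr fun j hj hjℓ => by rw [P.1.cw_eq_sum_extra hj hjℓ]; rfl
  have eRTab := (RowCounts.rtabEquiv hμ hlam hsub).subtypeEquiv (q := colSums)
    (p := fun R => ∀ v, 1 ≤ v → v ≤ ℓ → R.wt v = T v) fun R =>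
      forall₃_congr fun v hv _ => by rw [R.wt_eq_sum_count hv]; rfl
  exact ⟨(Equiv.subtypeEquivRight fun P => and_assoc.symm).trans <|
    (Equiv.subtypeSubtypeEquivSubtypeInter _ _).symm.trans <| eMTab.trans eRTab.symm⟩
end

section
/- With notation as in the bijection $X \to Y$ between single-value multiset fillings of shape $\mu$ and row-weakly-increasing skew fillings of shape $\lambda/\mu$: if $x \mapsto y$, then $x$ satisfies the maximality condition $\sum_{1 \leq j \leq k} (|b_{(i+1)j}| - |b_{i(j-1)}|) \leq 1$ for all $i \geq 1, k \geq 0$ if and only if the columns of $y$ are strictly increasing down columns (i.e., $y$ is semistandard). -/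
/-!
Each row of `y` is weakly increasing, so its entries in `[1, k]` occupy the columns
`μ i, …, μ i + N i k - 1`, where `N i k` counts them. Through the relation between `x` and
`y`, the partial sum `∑_{j ≤ k} |b_ij|` is `N i k` plus the number of boxes of row `i` in the
columns labeled `1, …, k`, and the maximality inequality for rows `i, i + 1` at `k + 1` becomes
`μ (i+1) + N (i+1) (k+1) ≤ μ i + N i k`: the entries `≤ k + 1` of row `i + 1` end no later
than the entries `≤ k` of row `i`. This is column strictness between adjacent rows.
-/

open Finset MvPolynomial

/-- A row-weakly-increasing filling of the skew shape `λ/μ` (0-indexed columns,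
value `0` marking empty cells) with values in `{1, …, ℓ}` such that every entry
`v` occurs on or above row `c_v = colHt n μ ℓ v` (no column condition imposed). -/
structure YTab (n ℓ : ℕ) (μ lam : Fin n → ℕ) where
  entry : Fin n → ℕ → ℕ
  supp : ∀ i j, entry i j ≠ 0 ↔ (μ i ≤ j ∧ j < lam i)
  le_alpha : ∀ i j, entry i j ≤ ℓ
  row : ∀ (i : Fin n) (j j' : ℕ), j ≤ j' → entry i j ≠ 0 → entry i j' ≠ 0 →
    entry i j ≤ entry i j'
  restrict : ∀ i j, entry i j ≠ 0 → (i : ℕ) < colHt n μ ℓ (entry i j)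

/-- The weight of such a filling: the number of entries equal to `v ≥ 1`. -/
def YTab.wt {n ℓ : ℕ} {μ lam : Fin n → ℕ} (y : YTab n ℓ μ lam) (v : ℕ) : ℕ :=
  ∑ i : Fin n, ((Finset.range (lam i)).filter fun j => y.entry i j = v).card

theorem Fin.lt_card_filter_lt_iff {n : ℕ} {α : Type*} [LinearOrder α] {f : Fin n → α}
    (hf : Antitone f) (c : α) (i : Fin n) :
    (i : ℕ) < #{t | c < f t} ↔ c < f i := by
  constructor
  · intro h
    by_contra hc
    have : #{t | c < f t} ≤ #(Iio i) := card_le_card fun t ht => by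
      simp only [mem_filter, mem_univ, true_and, mem_Iio] at ht ⊢
      by_contra hti
      exact hc (ht.trans_le (hf (not_lt.1 hti)))
    simp only [Fin.card_Iio] at this
    omega
  · intro hc
    have : #(Iic i) ≤ #{t | c < f t} := card_le_card fun t ht => by
      simp only [mem_filter, mem_univ, true_and, mem_Iic] at ht ⊢
      exact hc.trans_le (hf ht)
    simp only [Fin.card_Iic] at this
    omega

theorem Finset.sum_Icc_succ_comp_sub_one {M : Type*} [AddCommMonoid M] (f : ℕ → M) (k : ℕ) :
    ∑ j ∈ Icc 1 (k + 1), f (j - 1) = f 0 + ∑ j ∈ Icc 1 k, f j := by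
  induction k with
  | zero => simp
  | succ k ih =>
    rw [sum_Icc_succ_top (by omega), ih, sum_Icc_succ_top (by omega), add_assoc]
    rfl

namespace YTab

variable {n ℓ : ℕ} {μ lam : Fin n → ℕ} (y : YTab n ℓ μ lam)

def rowCount (i : Fin n) (k : ℕ) : ℕ :=
  #{p ∈ range (lam i) | y.entry i p ∈ Icc 1 k}

theorem sub_entry_lt (hμ : Antitone μ) {i : Fin n} {p : ℕ} (h : y.entry i p ≠ 0) :
    ℓ - y.entry i p < μ i :=
  (lt_colHt_iff hμ i _).1 (y.restrict i p h)

theorem rowCount_eq_zero (hμ : Antitone μ) {i : Fin n} {k : ℕ} (hk : k ≤ ℓ - μ i) :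
    y.rowCount i k = 0 := by
  rw [rowCount, card_eq_zero, filter_eq_empty_iff]
  intro p _ hp
  rw [mem_Icc] at hp
  have := y.sub_entry_lt hμ (i := i) (p := p) (by omega)
  omega

theorem sum_card_filter_entry_eq_rowCount (i : Fin n) (k : ℕ) :
    ∑ v ∈ Icc 1 k, #{p ∈ range (lam i) | y.entry i p = v} = y.rowCount i k := by
  rw [rowCount, card_eq_sum_card_fiberwise (f := y.entry i) (t := Icc 1 k)
    (s := {p ∈ range (lam i) | y.entry i p ∈ Icc 1 k}) fun p hp => (mem_filter.1 hp).2]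
  refine sum_congr rfl fun v hv => ?_
  rw [filter_filter]
  refine congrArg card (filter_congr fun p _ => ?_)
  exact ⟨fun h => ⟨h ▸ hv, h⟩, And.right⟩

theorem rowCount_le_sub (i : Fin n) (k : ℕ) : y.rowCount i k ≤ lam i - μ i := by
  have : y.rowCount i k ≤ #(Ico (μ i) (lam i)) := card_le_card fun p hp => by
    rw [mem_filter, mem_Icc] at hp
    exact mem_Ico.2 ((y.supp i p).1 (by omega))
  simpa using this

theorem entry_le_iff_lt_add_rowCount {i : Fin n} {p : ℕ} (h : y.entry i p ≠ 0) (k : ℕ) :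
    y.entry i p ≤ k ↔ p < μ i + y.rowCount i k := by
  obtain ⟨hμp, hpl⟩ := (y.supp i p).1 h
  constructor
  · intro hk
    have : #(Icc (μ i) p) ≤ y.rowCount i k := card_le_card fun q hq => by
      rw [mem_Icc] at hq
      have hq0 : y.entry i q ≠ 0 := (y.supp i q).2 ⟨hq.1, by omega⟩
      have := y.row i q p hq.2 hq0 h
      rw [mem_filter, mem_range, mem_Icc]
      omega
    simp only [Nat.card_Icc] at this
    omega
  · intro hp
    by_contra hk
    have : y.rowCount i k ≤ #(Ico (μ i) p) := card_le_card fun q hq => by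
      rw [mem_filter, mem_Icc] at hq
      have hq0 : y.entry i q ≠ 0 := by omega
      rw [mem_Ico]
      refine ⟨((y.supp i q).1 hq0).1, ?_⟩
      by_contra hpq
      have := y.row i p q (not_lt.1 hpq) h hq0
      omega
    simp only [Nat.card_Ico] at this
    omega

theorem entry_lt_entry_of_add_rowCount_le {i i' : Fin n} {p k : ℕ} (hp : y.entry i p ≠ 0)
    (hp' : y.entry i' p = k + 1) (h : μ i' + y.rowCount i' (k + 1) ≤ μ i + y.rowCount i k) :
    y.entry i p < y.entry i' p := by
  have h' := (y.entry_le_iff_lt_add_rowCount (i := i') (by omega) (k + 1)).1 hp'.le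
  have := (y.entry_le_iff_lt_add_rowCount hp k).2 (by omega)
  omega

theorem add_rowCount_succ_le {i i' : Fin n} (hμ : μ i' ≤ μ i) (hlam : lam i' ≤ lam i)
    (hcol : ∀ p, y.entry i p ≠ 0 → y.entry i' p ≠ 0 → y.entry i p < y.entry i' p) (k : ℕ) :
    μ i' + y.rowCount i' (k + 1) ≤ μ i + y.rowCount i k := by
  rcases Nat.eq_zero_or_pos (y.rowCount i' (k + 1)) with h0 | hpos
  · omega
  set p := μ i' + y.rowCount i' (k + 1) - 1
  have hpl : p < lam i' := by
    have := y.rowCount_le_sub i' (k + 1)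
    omega
  have hp' : y.entry i' p ≠ 0 := (y.supp i' p).2 ⟨by omega, hpl⟩
  have hpk := (y.entry_le_iff_lt_add_rowCount hp' (k + 1)).2 (by omega)
  by_cases hpμ : p < μ i
  · omega
  have hp : y.entry i p ≠ 0 := (y.supp i p).2 ⟨by omega, by omega⟩
  have := hcol p hp hp'
  have := (y.entry_le_iff_lt_add_rowCount hp k).1 (by omega)
  omega

/-- Column strictness propagates from adjacent rows, since the nonzero entries of a
column occupy an interval of rows. -/
theorem entry_lt_entry_of_forall_succ (hμ : Antitone μ) (hlam : Antitone lam)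
    (hadj : ∀ i i' : Fin n, (i : ℕ) + 1 = i' → ∀ p,
      y.entry i p ≠ 0 → y.entry i' p ≠ 0 → y.entry i p < y.entry i' p)
    {i i' : Fin n} (hii : i < i') (p : ℕ) (hp : y.entry i p ≠ 0) (hp' : y.entry i' p ≠ 0) :
    y.entry i p < y.entry i' p := by
  obtain ⟨m, hm⟩ : ∃ m, (i' : ℕ) = i + m + 1 := ⟨i' - i - 1, by omega⟩
  induction m generalizing i' with
  | zero => exact hadj i i' (by omega) p hp hp'
  | succ m ih =>
    set i'' : Fin n := ⟨i + m + 1, by omega⟩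
    obtain ⟨hμp, -⟩ := (y.supp i p).1 hp
    obtain ⟨-, hpl⟩ := (y.supp i' p).1 hp'
    have hp'' : y.entry i'' p ≠ 0 := (y.supp i'' p).2
      ⟨(hμ (Fin.le_def.2 (by simp [i'']; omega))).trans hμp,
        hpl.trans_le (hlam (Fin.le_def.2 (by simp [i'']; omega)))⟩
    have := ih (Fin.lt_def.2 (by simp [i''])) hp'' rfl
    have := hadj i'' i' (by simp [i'']; omega) p hp'' hp'
    omega

end YTab

namespace MTab

variable {n ℓ : ℕ} {μ lam : Fin n → ℕ} (x : MTab n ℓ μ) (y : YTab n ℓ μ lam)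

theorem box_zero (i : Fin n) : x.box i 0 = 0 := by
  by_contra h
  have := (x.supp i 0).1 h
  omega

theorem card_box_eq (hμ : Antitone μ) {i : Fin n}
    (hrel : ∀ j, 1 ≤ j → #{p ∈ range (lam i) | y.entry i p = j} = (x.box i j).card - 1)
    {j : ℕ} (hj : 1 ≤ j) :
    (x.box i j).card
      = #{p ∈ range (lam i) | y.entry i p = j} + if j ≤ ℓ ∧ ℓ - j < μ i then 1 else 0 := by
  by_cases hc : j ≤ ℓ ∧ ℓ - j < μ i
  · have := Multiset.card_pos.2 ((x.supp i j).2 ⟨hj, hc⟩)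
    rw [if_pos hc, hrel j hj]
    omega
  · have hbox : x.box i j = 0 := not_not.1 fun h => hc ((x.supp i j).1 h).2
    rw [if_neg hc, hbox, card_eq_zero.2 (filter_eq_empty_iff.2 fun p _ hp => hc ?_)]
    · rfl
    have hp0 : y.entry i p ≠ 0 := by omega
    exact ⟨hp ▸ y.le_alpha i p, hp ▸ y.sub_entry_lt hμ hp0⟩

/-- `min k ℓ - (ℓ - μ i)` is the number of boxes of row `i` in the columns labeled
`1, …, k`. -/
theorem sum_card_box_eq (hμ : Antitone μ) {i : Fin n}
    (hrel : ∀ j, 1 ≤ j → #{p ∈ range (lam i) | y.entry i p = j} = (x.box i j).card - 1)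
    (k : ℕ) :
    ∑ j ∈ Icc 1 k, (x.box i j).card = y.rowCount i k + (min k ℓ - (ℓ - μ i)) := by
  rw [sum_congr rfl fun j hj => x.card_box_eq y hμ hrel (mem_Icc.1 hj).1, sum_add_distrib,
    y.sum_card_filter_entry_eq_rowCount, sum_boole]
  have : {j ∈ Icc 1 k | j ≤ ℓ ∧ ℓ - j < μ i} = Ioc (ℓ - μ i) (min k ℓ) := by
    ext j
    simp only [mem_filter, mem_Icc, mem_Ioc]
    omega
  rw [this, Nat.card_Ioc]
  rfl

theorem sum_card_box_sub_le_one_iff (hμ : Antitone μ)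
    (hrel : ∀ (i : Fin n) (j : ℕ), 1 ≤ j →
      #{p ∈ range (lam i) | y.entry i p = j} = (x.box i j).card - 1)
    (i i' : Fin n) (k : ℕ) :
    ∑ j ∈ Icc 1 (k + 1), (((x.box i' j).card : ℤ) - ((x.box i (j - 1)).card : ℤ)) ≤ 1 ↔
      y.rowCount i' (k + 1) + (min (k + 1) ℓ - (ℓ - μ i'))
        ≤ 1 + y.rowCount i k + (min k ℓ - (ℓ - μ i)) := by
  rw [sum_sub_distrib, sum_Icc_succ_comp_sub_one (fun j => ((x.box i j).card : ℤ)),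
    x.box_zero]
  have h' := x.sum_card_box_eq y hμ (hrel i') (k + 1)
  have h := x.sum_card_box_eq y hμ (hrel i) k
  push_cast [← Nat.cast_sum, h, h']
  simp only [Multiset.card_zero, Nat.cast_zero, zero_add]
  omega

end MTab

theorem stmt9_general (n ℓ : ℕ) (hn : 0 < n) (μ lam : Fin n → ℕ)
    (hμ : ∀ i j : Fin n, i ≤ j → μ j ≤ μ i) (hl : ℓ = μ ⟨0, hn⟩)
    (hlam : ∀ i j : Fin n, i ≤ j → lam j ≤ lam i)
    (x : MTab n ℓ μ)
    (y : YTab n ℓ μ lam)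
    (hrel : ∀ (i : Fin n) (j : ℕ), 1 ≤ j →
      ((Finset.range (lam i)).filter fun jj => y.entry i jj = j).card
        = (x.box i j).card - 1) :
    (∀ (i i' : Fin n), (i : ℕ) + 1 = (i' : ℕ) → ∀ k : ℕ,
      (∑ j ∈ Finset.Icc 1 k,
        (((x.box i' j).card : ℤ) - ((x.box i (j - 1)).card : ℤ))) ≤ 1)
    ↔
    (∀ (i i' : Fin n) (j : ℕ), i < i' → y.entry i j ≠ 0 → y.entry i' j ≠ 0 →
      y.entry i j < y.entry i' j) := by
  have hμℓ : ∀ i, μ i ≤ ℓ := fun i => hl ▸ hμ _ _ (Fin.le_def.2 (Nat.zero_le _))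
  have hμ_succ : ∀ i i' : Fin n, (i : ℕ) + 1 = i' → μ i' ≤ μ i :=
    fun i i' h => hμ _ _ (Fin.le_def.2 (by omega))
  constructor
  · intro hmax i i' p hii
    refine y.entry_lt_entry_of_forall_succ hμ hlam (fun i i' hii p hp hp' => ?_) hii p
    obtain ⟨k, hk⟩ := Nat.exists_eq_succ_of_ne_zero hp'
    have hkℓ := y.le_alpha i' p
    have hkμ := y.sub_entry_lt hμ hp'
    have hcond := (x.sum_card_box_sub_le_one_iff y hμ hrel i i' k).1 (hmax i i' hii (k + 1))
    refine y.entry_lt_entry_of_add_rowCount_le hp hk ?_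
    have := hμℓ i
    have := hμ_succ i i' hii
    omega
  · intro hcol i i' hii k
    cases k with
    | zero => simp
    | succ k =>
      rw [x.sum_card_box_sub_le_one_iff y hμ hrel]
      have hii' : μ i' ≤ μ i := hμ_succ i i' hii
      have hdom := y.add_rowCount_succ_le hii' (hlam _ _ (Fin.le_def.2 (by omega)))
        (hcol i i' · (Fin.lt_def.2 (by omega))) k
      have := hμℓ i
      by_cases hk : k + 1 ≤ ℓ - μ i'
      · have := y.rowCount_eq_zero hμ hk
        omega
      · omega

/-- if `x` (a filling of shape `μ` in which box `b_{ij}` contains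
only copies of the row value `i+1`) corresponds to `y` (a row-weakly-increasing
filling of shape `λ/μ`) under the row-content relation (row `i` of `y` contains
exactly `|b_{ij}(x)| - 1` copies of `j`), then `x` satisfies the maximality
condition `∑_{1 ≤ j ≤ k} (|b_{(i+1)j}| - |b_{i(j-1)}|) ≤ 1` if and only if the
columns of `y` are strictly increasing down columns (i.e. `y` is semistandard). -/
theorem stmt9 (n ℓ : ℕ) (hn : 0 < n) (μ lam : Fin n → ℕ)
    (hμ : ∀ i j : Fin n, i ≤ j → μ j ≤ μ i) (hl : ℓ = μ ⟨0, hn⟩)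
    (hlam : ∀ i j : Fin n, i ≤ j → lam j ≤ lam i) (hsub : ∀ i, μ i ≤ lam i)
    (x : MTab n ℓ μ) (hx : ∀ (i : Fin n) (j : ℕ), ∀ a ∈ x.box i j, a = (i : ℕ) + 1)
    (y : YTab n ℓ μ lam)
    (hrel : ∀ (i : Fin n) (j : ℕ), 1 ≤ j →
      ((Finset.range (lam i)).filter fun jj => y.entry i jj = j).card
        = (x.box i j).card - 1) :
    (∀ (i i' : Fin n), (i : ℕ) + 1 = (i' : ℕ) → ∀ k : ℕ,
      (∑ j ∈ Finset.Icc 1 k,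
        (((x.box i' j).card : ℤ) - ((x.box i (j - 1)).card : ℤ))) ≤ 1)
    ↔
    (∀ (i i' : Fin n) (j : ℕ), i < i' → y.entry i j ≠ 0 → y.entry i' j ≠ 0 →
      y.entry i j < y.entry i' j) :=
  stmt9_general n ℓ hn μ lam hμ hl hlam x y hrel
end

section
/- Let $\mu$ be a strict partition with $m$ distinct nonzero parts, $\delta = (m-1, m-2, \ldots, 0)$, and conjugate $\mu' = (c_\ell,\ldots,c_1)$. There is a bijection between maximal shifted multiset tableaux of shape $\mu$ with weight $\lambda$ and diagonal weight $\mathbf{T}$, and shifted restricted tableaux in $SRT(\lambda/\mu)$ with weight $\mathbf{T}$ (i.e., semistandard tableaux of shape $(\lambda-\delta)/(\mu-\delta)$ in alphabet $\{1,\ldots,\ell\}$ with every entry $i$ on or above row $c_i$). -/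
open Finset MvPolynomial

/-- Entries of shifted tableaux are coded by natural numbers: the primed value
`k'` is coded `2k` and the unprimed value `k` is coded `2k + 1` (`k ≥ 1`), so the
order `1' < 1 < 2' < 2 < ⋯` is the usual order on codes, primed = even code. -/
def diagHt (m : ℕ) (μ : Fin m → ℕ) (ℓ j : ℕ) : ℕ :=
  (Finset.univ.filter fun i : Fin m => ℓ - j < μ i).card

/-- A signed shifted multiset tableau of shape `μ` (a strict partition with `m`
parts, largest part `ℓ`).  `box i j` is the content of the box of row `i`
(0-indexed) lying on the diagonal labeled `j` (diagonals in the `↘` direction are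
labeled `ℓ, …, 1` from left to right; the box directly to the right of `d_{i(j+1)}`
is `d_{ij}`, and the box directly below `d_{ij}` is `d_{(i+1)(j+1)}`).  Each box is
a nonempty multiset of codes (primed values with multiplicity at most one); every
entry `z` directly to the right of a box `b` satisfies `a < z`, or `a = z` with both
unprimed, for all `a ∈ b`; every entry `z` directly below a box `b` satisfies
`a < z`, or `a = z` with both primed, for some `a ∈ b`. -/
structure ShMT (m ℓ : ℕ) (μ : Fin m → ℕ) where
  box : Fin m → ℕ → Multiset ℕ
  pos : ∀ i j, ∀ a ∈ box i j, 2 ≤ a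
  primedOnce : ∀ i j a, Even a → (box i j).count a ≤ 1
  supp : ∀ i j, box i j ≠ 0 ↔ (1 ≤ j ∧ j ≤ ℓ ∧ ℓ - j < μ i)
  right : ∀ (i : Fin m) (j : ℕ), ∀ a ∈ box i (j + 1), ∀ z ∈ box i j,
    a < z ∨ (a = z ∧ Odd a)
  below : ∀ (i i' : Fin m) (j : ℕ), (i : ℕ) + 1 = (i' : ℕ) → box i j ≠ 0 →
    ∀ z ∈ box i' (j + 1), ∃ a ∈ box i j, a < z ∨ (a = z ∧ Even a)

/-- The condition distinguishing (unsigned) shifted multiset tableaux among the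
signed ones: the smallest entry of each row (which lies in the leftmost box of the
row, i.e. on the diagonal labeled `ℓ`) is unprimed; equivalently, every primed
entry of a leftmost box has a strictly smaller entry in that box. -/
def ShMT.RowMinUnprimed {m ℓ : ℕ} {μ : Fin m → ℕ} (P : ShMT m ℓ μ) : Prop :=
  ∀ i : Fin m, ∀ a ∈ P.box i ℓ, Even a → ∃ b ∈ P.box i ℓ, b < a

/-- A tableau has single entries if each box contains at most one entry. -/
def ShMT.IsSingle {m ℓ : ℕ} {μ : Fin m → ℕ} (P : ShMT m ℓ μ) : Prop :=
  ∀ (i : Fin m) (j : ℕ), (P.box i j).card ≤ 1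

/-- The weight of a shifted multiset tableau: the number of entries equal to `v`
or `v'`. -/
def ShMT.wt {m ℓ : ℕ} {μ : Fin m → ℕ} (P : ShMT m ℓ μ) (v : ℕ) : ℕ :=
  ∑ i : Fin m, ∑ j ∈ Finset.Icc 1 ℓ,
    ((P.box i j).count (2 * v) + (P.box i j).count (2 * v + 1))

/-- The diagonal weight at diagonal label `j`: the number of entries on diagonal
`j` minus the number of boxes on diagonal `j`. -/
def ShMT.dw {m ℓ : ℕ} {μ : Fin m → ℕ} (P : ShMT m ℓ μ) (j : ℕ) : ℕ :=
  (∑ i : Fin m, (P.box i j).card) - diagHt m μ ℓ j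

/-- The maximality conditions for a shifted multiset tableau: box `d_{ij}` (row
`i`, 0-indexed) contains only unprimed entries equal to `i + 1` (the 1-indexed row
number; code `2(i+1)+1`), and for all adjacent rows `i, i+1` and all `k ≥ 0`,
`∑_{1 ≤ j ≤ k} (|d_{(i+1)j}| - |d_{i(j-1)}|) ≤ 0`. -/
def ShMT.IsMax {m ℓ : ℕ} {μ : Fin m → ℕ} (P : ShMT m ℓ μ) : Prop :=
  (∀ (i : Fin m) (j : ℕ), ∀ a ∈ P.box i j, a = 2 * ((i : ℕ) + 1) + 1) ∧
  (∀ (i i' : Fin m), (i : ℕ) + 1 = (i' : ℕ) → ∀ k : ℕ,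
    (∑ j ∈ Finset.Icc 1 k,
      (((P.box i' j).card : ℤ) - ((P.box i (j - 1)).card : ℤ))) ≤ 0)

/-- A shifted restricted tableau of shape `(λ-δ)/(μ-δ)`, `δ = (m-1, …, 1, 0)`:
a semistandard filling (0-indexed columns, value `0` marking empty cells; row `i`
occupies columns `μ i - (m-1-i) ≤ j < λ i - (m-1-i)`) with values in `{1, …, ℓ}`,
weakly increasing along rows, strictly increasing down columns, and with every
entry `v` occurring on or above row `c_v = diagHt m μ ℓ v` (1-indexed rows). -/
structure SRTab (m ℓ : ℕ) (μ lam : Fin m → ℕ) where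
  entry : Fin m → ℕ → ℕ
  supp : ∀ i j, entry i j ≠ 0 ↔
    (μ i - (m - 1 - (i : ℕ)) ≤ j ∧ j < lam i - (m - 1 - (i : ℕ)))
  le_alpha : ∀ i j, entry i j ≤ ℓ
  row : ∀ (i : Fin m) (j j' : ℕ), j ≤ j' → entry i j ≠ 0 → entry i j' ≠ 0 →
    entry i j ≤ entry i j'
  col : ∀ (i i' : Fin m) (j : ℕ), i < i' → entry i j ≠ 0 → entry i' j ≠ 0 →
    entry i j < entry i' j
  restrict : ∀ i j, entry i j ≠ 0 → (i : ℕ) < diagHt m μ ℓ (entry i j)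

/-- The weight of a shifted restricted tableau: the number of entries equal to
`v ≥ 1`. -/
def SRTab.wt {m ℓ : ℕ} {μ lam : Fin m → ℕ} (R : SRTab m ℓ μ lam) (v : ℕ) : ℕ :=
  ∑ i : Fin m, ((Finset.range (lam i)).filter fun j => R.entry i j = v).card


/-!
A maximal shifted multiset tableau is determined by its box sizes `n i j = |d_{ij}|`, since
box `d_{ij}` holds only copies of `i + 1`; the maximality inequalities say that the partial sums
`∑_{j ≤ k} n_{i+1,j}` are dominated by `∑_{j < k} n_{i,j}`. On the other side, a row of a
restricted tableau is a weakly increasing word, determined by how many entries `v` it contains,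
and one takes that number to be `n i v - 1` (the excess of the box `d_{iv}` over a single entry).
Under this dictionary the partial sum inequality for rows `i, i + 1` at `k` becomes the statement
that the entries `≤ k` of row `i + 1` end no further right than the entries `≤ k - 1` of row `i`,
which is column strictness; the weights and row restrictions match up directly.
-/

namespace ShiftedTableau

variable {m ℓ : ℕ}

lemma add_le_add_of_strictAnti {f : Fin m → ℕ} (hf : StrictAnti f) {i j : Fin m}
    (h : i ≤ j) : f j + j ≤ f i + i := by
  obtain ⟨d, hd⟩ : ∃ d, (j : ℕ) = i + d := ⟨j - i, by rw [Fin.le_def] at h; omega⟩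
  induction d generalizing j with
  | zero => rw [show j = i from Fin.ext (by omega)]
  | succ d ih =>
    let j' : Fin m := ⟨j - 1, by omega⟩
    have hj' : j' < j := Fin.lt_def.2 (by simp [j']; omega)
    have := ih (j := j') (Fin.le_def.2 (by simp [j']; omega)) (by simp [j']; omega)
    have := hf hj'
    simp only [j'] at *
    omega

/-- The first column of row `i` of `f - δ`, `δ = (m - 1, …, 1, 0)` (0-indexed columns). -/
def rowStart (f : Fin m → ℕ) (i : Fin m) : ℕ := f i - (m - 1 - i)

lemma rowStart_le (f : Fin m → ℕ) (i : Fin m) : rowStart f i ≤ f i := Nat.sub_le _ _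

lemma rowStart_antitone {f : Fin m → ℕ} (hf : StrictAnti f) : Antitone (rowStart f) := by
  intro i j hij
  have := add_le_add_of_strictAnti hf hij
  have := j.isLt
  unfold rowStart
  omega

/-- The box `d_{ij}` of the shifted diagram of `μ` exists. -/
def HasBox (ℓ : ℕ) (μ : Fin m → ℕ) (i : Fin m) (j : ℕ) : Prop :=
  1 ≤ j ∧ j ≤ ℓ ∧ ℓ - j < μ i

instance (ℓ : ℕ) (μ : Fin m → ℕ) (i : Fin m) (j : ℕ) : Decidable (HasBox ℓ μ i j) :=
  inferInstanceAs (Decidable (_ ∧ _ ∧ _))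

lemma lt_card_filter_iff {p : Fin m → Prop} [DecidablePred p]
    (hp : ∀ i j, i ≤ j → p j → p i) (i : Fin m) : (i : ℕ) < #{i | p i} ↔ p i := by
  constructor
  · intro hi
    by_contra hpi
    have hsub : ({i | p i} : Finset (Fin m)) ⊆ Iio i := fun j hj => by
      simp only [mem_filter, mem_univ, true_and] at hj
      exact mem_Iio.2 (lt_of_not_ge fun hij => hpi (hp i j hij hj))
    have := card_le_card hsub
    rw [Fin.card_Iio] at this
    omega
  · intro hpi
    have hsub : Iic i ⊆ ({i | p i} : Finset (Fin m)) := fun j hj => by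
      simpa using hp j i (mem_Iic.1 hj) hpi
    have := card_le_card hsub
    rw [Fin.card_Iic] at this
    omega

lemma lt_diagHt_iff {μ : Fin m → ℕ} (hμ : StrictAnti μ) {v : ℕ} (hv₁ : 1 ≤ v) (hv₂ : v ≤ ℓ)
    (i : Fin m) : (i : ℕ) < diagHt m μ ℓ v ↔ HasBox ℓ μ i v := by
  rw [diagHt, lt_card_filter_iff (fun i j hij h => lt_of_lt_of_le h (hμ.antitone hij))]
  exact ⟨fun h => ⟨hv₁, hv₂, h⟩, fun h => h.2.2⟩

lemma diagHt_eq_sum (μ : Fin m → ℕ) {v : ℕ} (hv₁ : 1 ≤ v) (hv₂ : v ≤ ℓ) :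
    diagHt m μ ℓ v = ∑ i, if HasBox ℓ μ i v then 1 else 0 := by
  rw [diagHt, card_filter]
  exact sum_congr rfl fun i _ => if_congr ⟨fun h => ⟨hv₁, hv₂, h⟩, fun h => h.2.2⟩ rfl rfl

lemma sum_Icc_pred {M : Type*} [AddCommMonoid M] {f : ℕ → M} (hf : f 0 = 0) (k : ℕ) :
    ∑ j ∈ Icc 1 k, f (j - 1) = ∑ j ∈ Icc 1 (k - 1), f j := by
  induction k with
  | zero => rfl
  | succ k ih =>
    rcases k with _ | k
    · simp [hf]
    · rw [sum_Icc_succ_top (by omega), ih, Nat.add_sub_cancel, Nat.add_sub_cancel,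
        sum_Icc_succ_top (by omega)]

lemma sum_sub_nonpos_iff {f g : ℕ → ℕ} (hg : g 0 = 0) (k : ℕ) :
    ∑ j ∈ Icc 1 k, ((f j : ℤ) - g (j - 1)) ≤ 0 ↔
      ∑ j ∈ Icc 1 k, f j ≤ ∑ j ∈ Icc 1 (k - 1), g j := by
  rw [sum_sub_distrib, sum_Icc_pred (f := fun j => (g j : ℤ)) (by simp [hg]), sub_nonpos]
  exact_mod_cast Iff.rfl

lemma le_apply_pred_of_lt {g : Fin m → ℕ → ℕ} (hg : ∀ i, Monotone (g i))
    (hadj : ∀ i i' : Fin m, (i : ℕ) + 1 = i' → ∀ k ≤ ℓ, g i' k ≤ g i (k - 1))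
    {i i' : Fin m} (h : i < i') {k : ℕ} (hk : k ≤ ℓ) : g i' k ≤ g i (k - 1) := by
  obtain ⟨d, hd⟩ : ∃ d, (i' : ℕ) = i + 1 + d := ⟨i' - (i + 1), by rw [Fin.lt_def] at h; omega⟩
  induction d generalizing i' k with
  | zero => exact hadj i i' (by omega) k hk
  | succ d ih =>
    let i'' : Fin m := ⟨i' - 1, by omega⟩
    calc g i' k ≤ g i'' (k - 1) := hadj i'' i' (by simp [i'']; omega) k hk
      _ ≤ g i (k - 1 - 1) :=
        ih (Fin.lt_def.2 (by simp [i'']; omega)) (by omega) (by simp [i'']; omega)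
      _ ≤ g i (k - 1) := hg i (by omega)

section Multiplicities

variable {μ : Fin m → ℕ} {n : Fin m → ℕ → ℕ}

/-- The number of entries of row `i` on the diagonals `1, …, k` beyond one per box. -/
def excess (ℓ : ℕ) (μ : Fin m → ℕ) (n : Fin m → ℕ → ℕ) (i : Fin m) (k : ℕ) : ℕ :=
  ∑ j ∈ Icc 1 k, (n i j - if HasBox ℓ μ i j then 1 else 0)

lemma excess_zero (i : Fin m) : excess ℓ μ n i 0 = 0 := rfl

lemma excess_succ (i : Fin m) (k : ℕ) :
    excess ℓ μ n i (k + 1) =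
      excess ℓ μ n i k + (n i (k + 1) - if HasBox ℓ μ i (k + 1) then 1 else 0) :=
  sum_Icc_succ_top (by omega) _

lemma excess_mono (i : Fin m) : Monotone (excess ℓ μ n i) := fun _ _ h =>
  sum_le_sum_of_subset (Icc_subset_Icc_right h)

lemma excess_eq_zero (hn : ∀ i j, n i j ≠ 0 ↔ HasBox ℓ μ i j) {i : Fin m} {k : ℕ}
    (hk : k ≤ ℓ - μ i) : excess ℓ μ n i k = 0 :=
  sum_eq_zero fun j hj => by
    have hbox : ¬ HasBox ℓ μ i j := fun h => by have := h.2.2; simp only [mem_Icc] at hj; omega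
    simp [hbox, not_not.1 (mt (hn i j).1 hbox)]

lemma sum_eq_excess_add (hn : ∀ i j, n i j ≠ 0 ↔ HasBox ℓ μ i j) (i : Fin m) (k : ℕ) :
    ∑ j ∈ Icc 1 k, n i j = excess ℓ μ n i k + (min k ℓ - (ℓ - μ i)) := by
  have hboxes : #{j ∈ Icc 1 k | HasBox ℓ μ i j} = min k ℓ - (ℓ - μ i) := by
    rw [show {j ∈ Icc 1 k | HasBox ℓ μ i j} = Icc (ℓ - μ i + 1) (min k ℓ) by
      ext j; rw [mem_filter]; simp only [mem_Icc, HasBox]; omega, Nat.card_Icc]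
    omega
  rw [excess, ← hboxes, card_filter, ← sum_add_distrib]
  refine sum_congr rfl fun j _ => ?_
  by_cases h : HasBox ℓ μ i j
  · have := (hn i j).2 h
    simp only [h, if_true]
    omega
  · simp [h, not_not.1 (mt (hn i j).1 h)]

lemma sum_Icc_of_le (hn : ∀ i j, n i j ≠ 0 ↔ HasBox ℓ μ i j) (i : Fin m) {k : ℕ} (hk : ℓ ≤ k) :
    ∑ j ∈ Icc 1 k, n i j = ∑ j ∈ Icc 1 ℓ, n i j :=
  (sum_subset (Icc_subset_Icc_right hk) fun j hj hj' => by
    by_contra h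
    have := ((hn i j).1 h).2.1
    simp only [mem_Icc] at hj hj'
    omega).symm

lemma eq_of_excess_eq {n' : Fin m → ℕ → ℕ} (hn : ∀ i j, n i j ≠ 0 ↔ HasBox ℓ μ i j)
    (hn' : ∀ i j, n' i j ≠ 0 ↔ HasBox ℓ μ i j)
    (h : ∀ i k, k ≤ ℓ → excess ℓ μ n i k = excess ℓ μ n' i k) : n = n' := by
  funext i j
  by_cases hbox : HasBox ℓ μ i j
  · obtain ⟨k, rfl⟩ : ∃ k, j = k + 1 := ⟨j - 1, by have := hbox.1; omega⟩
    have hk := h i (k + 1) hbox.2.1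
    rw [excess_succ, excess_succ, h i k (by have := hbox.2.1; omega)] at hk
    have := (hn i (k + 1)).2 hbox
    have := (hn' i (k + 1)).2 hbox
    simp only [hbox, if_true] at hk
    omega
  · rw [not_not.1 (mt (hn i j).1 hbox), not_not.1 (mt (hn' i j).1 hbox)]

/-- For adjacent rows the maximality inequality of box sizes is the inequality between the
columns where the entries `≤ k` of row `i'` and the entries `≤ k - 1` of row `i` stop. -/
lemma sum_le_sum_pred_iff (hμ : StrictAnti μ) (hμℓ : ∀ i, μ i ≤ ℓ)
    (hμm : ∀ i : Fin m, m ≤ μ i + i) (hn : ∀ i j, n i j ≠ 0 ↔ HasBox ℓ μ i j)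
    {i i' : Fin m} (hii' : (i : ℕ) + 1 = i') {k : ℕ} (hk : k ≤ ℓ) :
    ∑ j ∈ Icc 1 k, n i' j ≤ ∑ j ∈ Icc 1 (k - 1), n i j ↔
      rowStart μ i' + excess ℓ μ n i' k ≤ rowStart μ i + excess ℓ μ n i (k - 1) := by
  have hsum' := sum_eq_excess_add hn i' k
  have hsum := sum_eq_excess_add hn i (k - 1)
  have hμi : μ i' < μ i := hμ (Fin.lt_def.2 (by omega))
  have := hμℓ i
  have := hμm i'
  have := i'.isLt
  unfold rowStart
  by_cases hsmall : k ≤ ℓ - μ i'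
  · rw [excess_eq_zero hn hsmall] at hsum' ⊢
    omega
  · omega

/-- The box sizes of a maximal shifted multiset tableau of shape `μ`, weight `lam` and diagonal
weight `T`. -/
structure IsMaxMult (ℓ : ℕ) (μ lam : Fin m → ℕ) (T : ℕ → ℕ) (n : Fin m → ℕ → ℕ) : Prop where
  ne_zero_iff : ∀ i j, n i j ≠ 0 ↔ HasBox ℓ μ i j
  sum_row : ∀ i, ∑ j ∈ Icc 1 ℓ, n i j = lam i
  sum_diag : ∀ j, 1 ≤ j → j ≤ ℓ → (∑ i, n i j) - diagHt m μ ℓ j = T j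
  partialSum : ∀ i i' : Fin m, (i : ℕ) + 1 = i' → ∀ k : ℕ,
    ∑ j ∈ Icc 1 k, ((n i' j : ℤ) - (n i (j - 1) : ℤ)) ≤ 0

lemma IsMaxMult.apply_zero {lam : Fin m → ℕ} {T : ℕ → ℕ} (hN : IsMaxMult ℓ μ lam T n)
    (i : Fin m) : n i 0 = 0 :=
  not_not.1 fun h => absurd ((hN.ne_zero_iff i 0).1 h).1 (by omega)

end Multiplicities

end ShiftedTableau

namespace ShMT

open ShiftedTableau

variable {m ℓ : ℕ} {μ : Fin m → ℕ}

lemma ext_box {P Q : ShMT m ℓ μ} (h : P.box = Q.box) : P = Q := by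
  cases P; cases Q; cases h; rfl

/-- The tableau whose box `d_{ij}` holds `n i j` copies of `i + 1`. -/
def ofMult (n : Fin m → ℕ → ℕ) (hn : ∀ i j, n i j ≠ 0 ↔ HasBox ℓ μ i j) : ShMT m ℓ μ where
  box i j := Multiset.replicate (n i j) (2 * ((i : ℕ) + 1) + 1)
  pos i j a ha := by
    have := Multiset.eq_of_mem_replicate ha
    omega
  primedOnce i j a ha := by
    rw [Multiset.count_replicate, if_neg (by rintro rfl; exact Nat.not_even_bit1 _ ha)]
    omega
  supp i j := by
    rw [Ne, ← Multiset.card_eq_zero, Multiset.card_replicate]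
    exact hn i j
  right i j a ha z hz := by
    rw [Multiset.eq_of_mem_replicate ha, Multiset.eq_of_mem_replicate hz]
    exact Or.inr ⟨rfl, odd_two_mul_add_one _⟩
  below i i' j hii' hne z hz := by
    obtain ⟨hne, -⟩ := Multiset.mem_replicate.1 (Multiset.exists_mem_of_ne_zero hne).choose_spec
    refine ⟨_, Multiset.mem_replicate.2 ⟨hne, rfl⟩, Or.inl ?_⟩
    rw [Multiset.eq_of_mem_replicate hz]
    omega

lemma wt_succ (P : ShMT m ℓ μ) (hP : ∀ (i : Fin m) j, ∀ a ∈ P.box i j, a = 2 * ((i : ℕ) + 1) + 1)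
    (i : Fin m) : P.wt ((i : ℕ) + 1) = ∑ j ∈ Icc 1 ℓ, Multiset.card (P.box i j) := by
  have hcount : ∀ (i' : Fin m) j, (P.box i' j).count (2 * ((i : ℕ) + 1)) +
      (P.box i' j).count (2 * ((i : ℕ) + 1) + 1) =
        if i' = i then Multiset.card (P.box i' j) else 0 := fun i' j => by
    rw [Multiset.eq_replicate.2 ⟨rfl, hP i' j⟩, Multiset.count_replicate,
      Multiset.count_replicate, Multiset.card_replicate]
    split_ifs <;> omega
  simp [wt, hcount]

variable {lam : Fin m → ℕ} {T : ℕ → ℕ}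

def equivMult :
    {P : ShMT m ℓ μ // P.RowMinUnprimed ∧ P.IsMax ∧
        (∀ i : Fin m, P.wt ((i : ℕ) + 1) = lam i) ∧ (∀ j, 1 ≤ j → j ≤ ℓ → P.dw j = T j)} ≃
      {n : Fin m → ℕ → ℕ // IsMaxMult ℓ μ lam T n} where
  toFun P := ⟨fun i j => Multiset.card (P.1.box i j),
    { ne_zero_iff := fun i j => (Multiset.card_eq_zero.not).trans (P.1.supp i j)
      sum_row := fun i => (P.1.wt_succ P.2.2.1.1 i).symm.trans (P.2.2.2.1 i)
      sum_diag := P.2.2.2.2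
      partialSum := P.2.2.1.2 }⟩
  invFun n := ⟨ofMult n.1 n.2.ne_zero_iff, by
    have hofMult : ∀ (i : Fin m) j, ∀ a ∈ (ofMult n.1 n.2.ne_zero_iff).box i j,
        a = 2 * ((i : ℕ) + 1) + 1 := fun i j a => Multiset.eq_of_mem_replicate
    refine ⟨fun i a ha hev => ?_, ⟨hofMult, ?_⟩, fun i => ?_, fun j hj₁ hj₂ => ?_⟩
    · rw [hofMult i ℓ a ha] at hev
      exact absurd hev (Nat.not_even_bit1 _)
    · simpa [ofMult] using n.2.partialSum
    · rw [wt_succ _ hofMult]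
      simpa [ofMult] using n.2.sum_row i
    · simpa [ofMult, dw] using n.2.sum_diag j hj₁ hj₂⟩
  left_inv P := Subtype.ext <| ext_box <| funext₂ fun i j =>
    (Multiset.eq_replicate.2 ⟨rfl, P.2.2.1.1 i j⟩).symm
  right_inv n := Subtype.ext <| funext₂ fun i j => Multiset.card_replicate _ _

end ShMT

namespace SRTab

open ShiftedTableau

variable {m ℓ : ℕ} {μ lam : Fin m → ℕ}

lemma ext_entry {R S : SRTab m ℓ μ lam} (h : R.entry = S.entry) : R = S := by
  cases R; cases S; cases h; rfl

def countLE (R : SRTab m ℓ μ lam) (i : Fin m) (k : ℕ) : ℕ :=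
  #{c ∈ range (lam i) | R.entry i c ∈ Icc 1 k}

def count (R : SRTab m ℓ μ lam) (i : Fin m) (v : ℕ) : ℕ :=
  #{c ∈ range (lam i) | R.entry i c = v}

lemma entry_ne_zero_iff (R : SRTab m ℓ μ lam) (i : Fin m) (c : ℕ) :
    R.entry i c ≠ 0 ↔ rowStart μ i ≤ c ∧ c < rowStart lam i :=
  R.supp i c

lemma countLE_eq_sum_count (R : SRTab m ℓ μ lam) (i : Fin m) (k : ℕ) :
    R.countLE i k = ∑ v ∈ Icc 1 k, R.count i v := by
  rw [countLE, card_eq_sum_card_fiberwise (f := R.entry i)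
    (s := {c ∈ range (lam i) | R.entry i c ∈ Icc 1 k}) (t := Icc 1 k)
    fun c hc => (mem_filter.1 hc).2]
  refine sum_congr rfl fun v hv => ?_
  rw [count, filter_filter]
  congr 1
  exact filter_congr fun c _ => ⟨And.right, fun h => ⟨h ▸ hv, h⟩⟩

lemma entry_le_iff (R : SRTab m ℓ μ lam) {i : Fin m} {c : ℕ} (h0 : R.entry i c ≠ 0) (k : ℕ) :
    R.entry i c ≤ k ↔ c < rowStart μ i + R.countLE i k := by
  have hc := (R.entry_ne_zero_iff i c).1 h0
  have := rowStart_le lam i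
  constructor
  · intro hk
    have hsub : Icc (rowStart μ i) c ⊆ {c ∈ range (lam i) | R.entry i c ∈ Icc 1 k} := by
      intro c' hc'
      rw [mem_Icc] at hc'
      have h0' : R.entry i c' ≠ 0 := (R.entry_ne_zero_iff i c').2 ⟨hc'.1, by omega⟩
      have := R.row i c' c hc'.2 h0' h0
      rw [mem_filter, mem_range, mem_Icc]
      omega
    have := card_le_card hsub
    rw [Nat.card_Icc] at this
    unfold countLE
    omega
  · intro hlt
    by_contra! hk
    have hsub : {c ∈ range (lam i) | R.entry i c ∈ Icc 1 k} ⊆ Ico (rowStart μ i) c := by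
      intro c' hc'
      rw [mem_filter, mem_Icc] at hc'
      have h0' : R.entry i c' ≠ 0 := by omega
      refine mem_Ico.2 ⟨((R.entry_ne_zero_iff i c').1 h0').1, lt_of_not_ge fun hcc' => ?_⟩
      have := R.row i c c' hcc' h0 h0'
      omega
    have := card_le_card hsub
    rw [Nat.card_Ico] at this
    unfold countLE at hlt
    omega

lemma countLE_top (R : SRTab m ℓ μ lam) (i : Fin m) :
    R.countLE i ℓ = rowStart lam i - rowStart μ i := by
  rw [countLE, ← Nat.card_Ico]
  congr 1
  ext c
  have := R.le_alpha i c
  have := rowStart_le lam i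
  rw [mem_filter, mem_range, mem_Icc, mem_Ico]
  constructor
  · rintro ⟨-, h₁, -⟩
    exact (R.entry_ne_zero_iff i c).1 (by omega)
  · intro h
    have := (R.entry_ne_zero_iff i c).2 h
    omega

lemma countLE_le (R : SRTab m ℓ μ lam) (i : Fin m) (k : ℕ) :
    R.countLE i k ≤ rowStart lam i - rowStart μ i := by
  rw [← Nat.card_Ico]
  refine card_le_card fun c hc => ?_
  rw [mem_filter, mem_Icc] at hc
  exact mem_Ico.2 ((R.entry_ne_zero_iff i c).1 (by omega))

lemma hasBox_entry (hμ : StrictAnti μ) (R : SRTab m ℓ μ lam) {i : Fin m} {c : ℕ}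
    (h0 : R.entry i c ≠ 0) : HasBox ℓ μ i (R.entry i c) :=
  (lt_diagHt_iff hμ (Nat.one_le_iff_ne_zero.2 h0) (R.le_alpha i c) i).1 (R.restrict i c h0)

lemma count_eq_zero (hμ : StrictAnti μ) (R : SRTab m ℓ μ lam) {i : Fin m} {v : ℕ} (hv : 1 ≤ v)
    (hbox : ¬ HasBox ℓ μ i v) : R.count i v = 0 := by
  refine card_eq_zero.2 (filter_eq_empty_iff.2 fun c _ hc => hbox ?_)
  rw [← hc]
  exact R.hasBox_entry hμ (by omega)

/-- The box sizes of the maximal tableau corresponding to `R`: row `i` of `R` holds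
`R.mult i v - 1` entries `v`. -/
def mult (R : SRTab m ℓ μ lam) (i : Fin m) (j : ℕ) : ℕ :=
  if HasBox ℓ μ i j then R.count i j + 1 else 0

lemma mult_ne_zero_iff (R : SRTab m ℓ μ lam) (i : Fin m) (j : ℕ) :
    R.mult i j ≠ 0 ↔ HasBox ℓ μ i j := by
  unfold mult
  split_ifs with h <;> simp [h]

lemma excess_mult (hμ : StrictAnti μ) (R : SRTab m ℓ μ lam) (i : Fin m) (k : ℕ) :
    excess ℓ μ R.mult i k = R.countLE i k := by
  rw [countLE_eq_sum_count]
  refine sum_congr rfl fun j hj => ?_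
  unfold mult
  split_ifs with h
  · omega
  · rw [R.count_eq_zero hμ (mem_Icc.1 hj).1 h]

lemma sum_mult_row (hμ : StrictAnti μ) (hμℓ : ∀ i, μ i ≤ ℓ) (hμm : ∀ i : Fin m, m ≤ μ i + i)
    (hsub : ∀ i, μ i ≤ lam i) (R : SRTab m ℓ μ lam) (i : Fin m) :
    ∑ j ∈ Icc 1 ℓ, R.mult i j = lam i := by
  rw [sum_eq_excess_add R.mult_ne_zero_iff, excess_mult hμ, countLE_top]
  have := hμℓ i
  have := hμm i
  have := hsub i
  have := i.isLt
  unfold rowStart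
  omega

lemma wt_eq_sum_mult (hμ : StrictAnti μ) (R : SRTab m ℓ μ lam) {v : ℕ} (hv₁ : 1 ≤ v)
    (hv₂ : v ≤ ℓ) : R.wt v = (∑ i, R.mult i v) - diagHt m μ ℓ v := by
  have hmult : ∀ i, R.mult i v = R.count i v + if HasBox ℓ μ i v then 1 else 0 := fun i => by
    unfold mult
    split_ifs with h
    · rfl
    · rw [R.count_eq_zero hμ hv₁ h]
  rw [diagHt_eq_sum μ hv₁ hv₂, sum_congr rfl fun i _ => hmult i, sum_add_distrib,
    Nat.add_sub_cancel]
  rfl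

/-- Column strictness, read through the row counts. -/
lemma rowStart_add_countLE_le (hμ : StrictAnti μ) (hlam : StrictAnti lam)
    (R : SRTab m ℓ μ lam) {i i' : Fin m} (hii' : (i : ℕ) + 1 = i') (k : ℕ) :
    rowStart μ i' + R.countLE i' k ≤ rowStart μ i + R.countLE i (k - 1) := by
  have hlt : i < i' := Fin.lt_def.2 (by omega)
  have hstart := rowStart_antitone hμ hlt.le
  by_cases hzero : R.countLE i' k = 0
  · omega
  set c := rowStart μ i' + R.countLE i' k - 1
  have hend := rowStart_antitone hlam hlt.le
  have := R.countLE_le i' k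
  have hc' : R.entry i' c ≠ 0 := (R.entry_ne_zero_iff i' c).2 ⟨by omega, by omega⟩
  have hck : R.entry i' c ≤ k := (R.entry_le_iff hc' k).2 (by omega)
  by_cases hci : rowStart μ i ≤ c
  · have hc : R.entry i c ≠ 0 := (R.entry_ne_zero_iff i c).2 ⟨hci, by omega⟩
    have := R.col i i' c hlt hc hc'
    have := (R.entry_le_iff hc (k - 1)).1 (by omega)
    omega
  · omega

variable {T : ℕ → ℕ}

lemma isMaxMult_mult (hμ : StrictAnti μ) (hμℓ : ∀ i, μ i ≤ ℓ) (hμm : ∀ i : Fin m, m ≤ μ i + i)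
    (hlam : StrictAnti lam) (hsub : ∀ i, μ i ≤ lam i) (R : SRTab m ℓ μ lam)
    (hR : ∀ v, 1 ≤ v → v ≤ ℓ → R.wt v = T v) : IsMaxMult ℓ μ lam T R.mult where
  ne_zero_iff := R.mult_ne_zero_iff
  sum_row := R.sum_mult_row hμ hμℓ hμm hsub
  sum_diag j hj₁ hj₂ := (R.wt_eq_sum_mult hμ hj₁ hj₂).symm.trans (hR j hj₁ hj₂)
  partialSum i i' hii' k := by
    rw [sum_sub_nonpos_iff (by simp [mult, HasBox])]
    rcases le_or_gt k ℓ with hk | hk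
    · rw [sum_le_sum_pred_iff hμ hμℓ hμm R.mult_ne_zero_iff hii' hk, excess_mult hμ,
        excess_mult hμ]
      exact R.rowStart_add_countLE_le hμ hlam hii' k
    · rw [sum_Icc_of_le R.mult_ne_zero_iff _ hk.le,
        sum_Icc_of_le R.mult_ne_zero_iff _ (by omega : ℓ ≤ k - 1),
        R.sum_mult_row hμ hμℓ hμm hsub, R.sum_mult_row hμ hμℓ hμm hsub]
      exact (hlam (Fin.lt_def.2 (by omega))).le

lemma ext_of_countLE {R S : SRTab m ℓ μ lam}
    (h : ∀ i k, k ≤ ℓ → R.countLE i k = S.countLE i k) : R = S := by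
  refine ext_entry (funext₂ fun i c => ?_)
  have hiff : R.entry i c ≠ 0 ↔ S.entry i c ≠ 0 := (R.supp i c).trans (S.supp i c).symm
  by_cases h0 : R.entry i c = 0
  · rw [h0, eq_comm]
    simpa [h0] using hiff
  have hS := hiff.1 h0
  apply le_antisymm
  · rw [R.entry_le_iff h0, h i _ (S.le_alpha i c)]
    exact (S.entry_le_iff hS _).1 le_rfl
  · rw [S.entry_le_iff hS, ← h i _ (R.le_alpha i c)]
    exact (R.entry_le_iff h0 _).1 le_rfl

section OfMult

variable {n : Fin m → ℕ → ℕ}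

/-- The entry in column `c` of row `i` is the least `k` for which more than `c - rowStart μ i`
entries of the row are `≤ k`, the number of these being `excess ℓ μ n i k`. -/
def ofMultEntry (ℓ : ℕ) (μ : Fin m → ℕ) (n : Fin m → ℕ → ℕ) (i : Fin m) (c : ℕ) : ℕ :=
  if h : rowStart μ i ≤ c ∧ c < rowStart μ i + excess ℓ μ n i ℓ then
    Nat.find (p := fun k => c < rowStart μ i + excess ℓ μ n i k) ⟨ℓ, h.2⟩
  else 0

lemma ofMultEntry_le_iff {i : Fin m} {c : ℕ}
    (hc : rowStart μ i ≤ c ∧ c < rowStart μ i + excess ℓ μ n i ℓ) (k : ℕ) :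
    ofMultEntry ℓ μ n i c ≤ k ↔ c < rowStart μ i + excess ℓ μ n i k := by
  rw [ofMultEntry, dif_pos hc, Nat.find_le_iff]
  exact ⟨fun ⟨j, hj, h⟩ => h.trans_le (Nat.add_le_add_left (excess_mono i hj) _),
    fun h => ⟨k, le_rfl, h⟩⟩

lemma ofMultEntry_ne_zero_iff (i : Fin m) (c : ℕ) :
    ofMultEntry ℓ μ n i c ≠ 0 ↔ rowStart μ i ≤ c ∧ c < rowStart μ i + excess ℓ μ n i ℓ := by
  unfold ofMultEntry
  split_ifs with hc
  · simp only [hc]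
    simpa [excess_zero] using hc.1
  · simp [hc]

lemma ofMultEntry_le (i : Fin m) (c : ℕ) : ofMultEntry ℓ μ n i c ≤ ℓ := by
  by_cases hc : rowStart μ i ≤ c ∧ c < rowStart μ i + excess ℓ μ n i ℓ
  · exact (ofMultEntry_le_iff hc ℓ).2 hc.2
  · simp [ofMultEntry, hc]

lemma hasBox_ofMultEntry (hn : ∀ i j, n i j ≠ 0 ↔ HasBox ℓ μ i j) {i : Fin m} {c : ℕ}
    (hc : rowStart μ i ≤ c ∧ c < rowStart μ i + excess ℓ μ n i ℓ) :
    HasBox ℓ μ i (ofMultEntry ℓ μ n i c) := by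
  obtain ⟨k, hk⟩ : ∃ k, ofMultEntry ℓ μ n i c = k + 1 :=
    Nat.exists_eq_succ_of_ne_zero ((ofMultEntry_ne_zero_iff i c).2 hc)
  have hlt := (ofMultEntry_le_iff hc (k + 1)).1 hk.le
  have hge := mt (ofMultEntry_le_iff hc k).2 (by omega)
  rw [excess_succ] at hlt
  rw [hk]
  by_contra hbox
  simp [hbox, not_not.1 (mt (hn i (k + 1)).1 hbox)] at hlt
  omega

lemma rowStart_add_excess_top (hμℓ : ∀ i, μ i ≤ ℓ) (hμm : ∀ i : Fin m, m ≤ μ i + i)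
    (hN : IsMaxMult ℓ μ lam T n) (i : Fin m) :
    rowStart μ i + excess ℓ μ n i ℓ = rowStart lam i := by
  have := sum_eq_excess_add hN.ne_zero_iff i ℓ
  rw [hN.sum_row] at this
  have := hμℓ i
  have := hμm i
  unfold rowStart
  omega

lemma rowStart_add_excess_le (hμ : StrictAnti μ) (hμℓ : ∀ i, μ i ≤ ℓ)
    (hμm : ∀ i : Fin m, m ≤ μ i + i) (hN : IsMaxMult ℓ μ lam T n) {i i' : Fin m} (h : i < i')
    {k : ℕ} (hk : k ≤ ℓ) :
    rowStart μ i' + excess ℓ μ n i' k ≤ rowStart μ i + excess ℓ μ n i (k - 1) :=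
  le_apply_pred_of_lt (g := fun i k => rowStart μ i + excess ℓ μ n i k)
    (fun i _ _ h => Nat.add_le_add_left (excess_mono i h) _)
    (fun i i' hii' k hk => (sum_le_sum_pred_iff hμ hμℓ hμm hN.ne_zero_iff hii' hk).1
      ((sum_sub_nonpos_iff (hN.apply_zero i) k).1 (hN.partialSum i i' hii' k)))
    h hk

/-- The restricted tableau whose row `i` holds `n i v - 1` entries `v`. -/
def ofMult (hμ : StrictAnti μ) (hμℓ : ∀ i, μ i ≤ ℓ) (hμm : ∀ i : Fin m, m ≤ μ i + i)
    (hN : IsMaxMult ℓ μ lam T n) : SRTab m ℓ μ lam where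
  entry := ofMultEntry ℓ μ n
  supp i c := by
    rw [ofMultEntry_ne_zero_iff, rowStart_add_excess_top hμℓ hμm hN]
    rfl
  le_alpha := ofMultEntry_le
  row i c c' hcc' h h' :=
    (ofMultEntry_le_iff ((ofMultEntry_ne_zero_iff i c).1 h) _).2
      (hcc'.trans_lt ((ofMultEntry_le_iff ((ofMultEntry_ne_zero_iff i c').1 h') _).1 le_rfl))
  col i i' c hii' h h' := by
    have hc := (ofMultEntry_ne_zero_iff i c).1 h
    have hc' := (ofMultEntry_ne_zero_iff i' c).1 h'
    have hlt := (ofMultEntry_le_iff hc' (ofMultEntry ℓ μ n i' c)).1 le_rfl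
    have := rowStart_add_excess_le hμ hμℓ hμm hN hii' (ofMultEntry_le (μ := μ) (n := n) i' c)
    have := (ofMultEntry_le_iff hc (ofMultEntry ℓ μ n i' c - 1)).2 (by omega)
    omega
  restrict i c h :=
    (lt_diagHt_iff hμ (Nat.one_le_iff_ne_zero.2 h) (ofMultEntry_le i c) i).2
      (hasBox_ofMultEntry hN.ne_zero_iff ((ofMultEntry_ne_zero_iff i c).1 h))

lemma countLE_ofMult (hμ : StrictAnti μ) (hμℓ : ∀ i, μ i ≤ ℓ) (hμm : ∀ i : Fin m, m ≤ μ i + i)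
    (hN : IsMaxMult ℓ μ lam T n) (i : Fin m) {k : ℕ} (hk : k ≤ ℓ) :
    (ofMult hμ hμℓ hμm hN).countLE i k = excess ℓ μ n i k := by
  have htop := rowStart_add_excess_top hμℓ hμm hN i
  have hmono := excess_mono (ℓ := ℓ) (μ := μ) (n := n) i hk
  have := rowStart_le lam i
  rw [countLE, ← Nat.add_sub_cancel_left (n := rowStart μ i) (m := excess ℓ μ n i k),
    ← Nat.card_Ico]
  congr 1
  ext c
  simp only [mem_filter, mem_range, mem_Icc, mem_Ico]
  constructor
  · rintro ⟨-, h₁, h₂⟩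
    have hc := (ofMultEntry_ne_zero_iff i c).1 (Nat.one_le_iff_ne_zero.1 h₁)
    exact ⟨hc.1, (ofMultEntry_le_iff hc k).1 h₂⟩
  · rintro ⟨h₁, h₂⟩
    have hc : rowStart μ i ≤ c ∧ c < rowStart μ i + excess ℓ μ n i ℓ := ⟨h₁, by omega⟩
    have := (ofMultEntry_ne_zero_iff i c).2 hc
    exact ⟨by omega, Nat.one_le_iff_ne_zero.2 this, (ofMultEntry_le_iff hc k).2 h₂⟩

lemma mult_ofMult (hμ : StrictAnti μ) (hμℓ : ∀ i, μ i ≤ ℓ) (hμm : ∀ i : Fin m, m ≤ μ i + i)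
    (hN : IsMaxMult ℓ μ lam T n) : (ofMult hμ hμℓ hμm hN).mult = n :=
  eq_of_excess_eq (mult_ne_zero_iff _) hN.ne_zero_iff fun i _ hk => by
    rw [excess_mult hμ, countLE_ofMult hμ hμℓ hμm hN i hk]

lemma ofMult_mult (hμ : StrictAnti μ) (hμℓ : ∀ i, μ i ≤ ℓ) (hμm : ∀ i : Fin m, m ≤ μ i + i)
    {R : SRTab m ℓ μ lam} (hR : IsMaxMult ℓ μ lam T R.mult) : ofMult hμ hμℓ hμm hR = R :=
  ext_of_countLE fun i _ hk => by rw [countLE_ofMult hμ hμℓ hμm hR i hk, excess_mult hμ]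

end OfMult

def equivMult (hμ : StrictAnti μ) (hμℓ : ∀ i, μ i ≤ ℓ)
    (hμm : ∀ i : Fin m, m ≤ μ i + i) (hlam : StrictAnti lam) (hsub : ∀ i, μ i ≤ lam i) :
    {R : SRTab m ℓ μ lam // ∀ v, 1 ≤ v → v ≤ ℓ → R.wt v = T v} ≃
      {n : Fin m → ℕ → ℕ // IsMaxMult ℓ μ lam T n} where
  toFun R := ⟨R.1.mult, isMaxMult_mult hμ hμℓ hμm hlam hsub R.1 R.2⟩
  invFun n := ⟨ofMult hμ hμℓ hμm n.2, fun v hv₁ hv₂ => by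
    rw [wt_eq_sum_mult hμ _ hv₁ hv₂, mult_ofMult]
    exact n.2.sum_diag v hv₁ hv₂⟩
  left_inv R := Subtype.ext (ofMult_mult hμ hμℓ hμm (isMaxMult_mult hμ hμℓ hμm hlam hsub R.1 R.2))
  right_inv n := Subtype.ext (mult_ofMult hμ hμℓ hμm n.2)

end SRTab

/-- for a strict partition `μ` with `m` distinct nonzero parts,
largest part `ℓ`, a strict partition `λ ⊇ μ`, and `T = (T_1, …, T_ℓ)`, there is a
bijection between maximal shifted multiset tableaux of shape `μ` with weight `λ`
and diagonal weight `T`, and shifted restricted tableaux in `SRT(λ/μ)` with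
weight `T`. -/
theorem stmt17 (m ℓ : ℕ) (hm : 0 < m) (μ lam : Fin m → ℕ)
    (hstrict : ∀ i j : Fin m, i < j → μ j < μ i) (hpos : ∀ i, 0 < μ i)
    (hl : ℓ = μ ⟨0, hm⟩)
    (hlstrict : ∀ i j : Fin m, i < j → lam j < lam i) (hsub : ∀ i, μ i ≤ lam i)
    (T : ℕ → ℕ) :
    Nonempty
      ({P : ShMT m ℓ μ // P.RowMinUnprimed ∧ P.IsMax ∧
          (∀ i : Fin m, P.wt ((i : ℕ) + 1) = lam i) ∧
          (∀ j, 1 ≤ j → j ≤ ℓ → P.dw j = T j)} ≃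
        {R : SRTab m ℓ μ lam // ∀ v, 1 ≤ v → v ≤ ℓ → R.wt v = T v}) := by
  have hμ : StrictAnti μ := hstrict
  have hμℓ : ∀ i, μ i ≤ ℓ := fun i => hl ▸ hμ.antitone (Fin.le_def.2 (Nat.zero_le i))
  have hμm : ∀ i : Fin m, m ≤ μ i + i := fun i => by
    have hlast := ShiftedTableau.add_le_add_of_strictAnti hμ
      (Fin.le_def.2 (Nat.le_pred_of_lt i.isLt) : i ≤ ⟨m - 1, by omega⟩)
    have := hpos ⟨m - 1, by omega⟩
    simp only at hlast
    omega
  exact ⟨ShMT.equivMult.trans (SRTab.equivMult hμ hμℓ hμm hlstrict hsub).symm⟩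
end
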